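/- arXiv:2210.08805 — 14 statements merged into one kernel-verified Lean document; each statement's English description precedes it below -/
import Mathlib

section
/- If F is a closed subspace of codimension n in a normed space E, then the closure of F in the completion of E has codimension n. -/
/-!
A dense embedding `f : E → V` of topological vector spaces induces a linear map
`E ⧸ F → V ⧸ closure (f F)`. It is injective because `f⁻¹ (closure (f F)) = closure F = F`,
and surjective because its range is dense (as `f` has dense range) and finite-dimensional,
hence closed.
-/

open Topology

namespace Submodule

theorem comap_topologicalClosure_map_of_isInducing {R E V : Type*} [Semiring R]
    [AddCommMonoid E] [Module R E] [TopologicalSpace E] [ContinuousAdd E]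
    [ContinuousConstSMul R E] [AddCommMonoid V] [Module R V] [TopologicalSpace V]
    [ContinuousAdd V] [ContinuousConstSMul R V] {f : E →ₗ[R] V} (hf : IsInducing f)
    (F : Submodule R E) :
    (F.map f).topologicalClosure.comap f = F.topologicalClosure :=
  SetLike.coe_injective (hf.closure_eq_preimage_closure_image F).symm

variable {𝕜 E V : Type*} [NontriviallyNormedField 𝕜] [CompleteSpace 𝕜]
  [AddCommGroup E] [Module 𝕜 E] [TopologicalSpace E] [IsTopologicalAddGroup E]
  [ContinuousSMul 𝕜 E]
  [AddCommGroup V] [Module 𝕜 V] [TopologicalSpace V] [IsTopologicalAddGroup V]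
  [ContinuousSMul 𝕜 V]
  (F : Submodule 𝕜 E) [IsClosed (F : Set E)] [FiniteDimensional 𝕜 (E ⧸ F)]

theorem bijective_mapQ_topologicalClosure_map {f : E →ₗ[𝕜] V} (hf : IsInducing f)
    (hd : DenseRange f) :
    Function.Bijective
      (F.mapQ _ f (map_le_iff_le_comap.1 (F.map f).le_topologicalClosure)) := by
  set G := (F.map f).topologicalClosure
  set g := F.mapQ G f (map_le_iff_le_comap.1 (F.map f).le_topologicalClosure)
  constructor
  · rw [← LinearMap.ker_eq_bot, ker_mapQ, comap_topologicalClosure_map_of_isInducing hf,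
      IsClosed.submodule_topologicalClosure_eq ‹IsClosed (F : Set E)›, mkQ_map_self]
  · have : IsClosed (G : Set V) := isClosed_topologicalClosure _
    have hdense : DenseRange g :=
      DenseRange.of_comp (g := F.mkQ) <|
        G.mkQ_surjective.denseRange.comp hd G.isOpenQuotientMap_mkQ.continuous
    have hclosed : IsClosed (Set.range g) := (LinearMap.range g).closed_of_finiteDimensional
    rw [← Set.range_eq_univ, ← hclosed.closure_eq, hdense.closure_range]

noncomputable def quotientEquivQuotientTopologicalClosureMap (f : E →ₗ[𝕜] V) (hf : IsInducing f)
    (hd : DenseRange f) : (E ⧸ F) ≃ₗ[𝕜] V ⧸ (F.map f).topologicalClosure :=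
  LinearEquiv.ofBijective _ (F.bijective_mapQ_topologicalClosure_map hf hd)

end Submodule

/-- If `F` is a closed subspace of codimension `n` in a normed space `E`, then the closure
of `F` in the completion of `E` has codimension `n`. -/
theorem stmt0 {E : Type*} [NormedAddCommGroup E] [NormedSpace ℝ E]
    (F : Submodule ℝ E) (hF : IsClosed (F : Set E))
    (n : ℕ) (hfin : FiniteDimensional ℝ (E ⧸ F)) (hn : Module.finrank ℝ (E ⧸ F) = n) :
    FiniteDimensional ℝ (UniformSpace.Completion E ⧸
        (F.map (UniformSpace.Completion.toComplₗᵢ (𝕜 := ℝ) (E := E)).toLinearMap).topologicalClosure) ∧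
      Module.finrank ℝ (UniformSpace.Completion E ⧸
        (F.map (UniformSpace.Completion.toComplₗᵢ (𝕜 := ℝ) (E := E)).toLinearMap).topologicalClosure) = n := by
  let e := F.quotientEquivQuotientTopologicalClosureMap
    (UniformSpace.Completion.toComplₗᵢ (𝕜 := ℝ) (E := E)).toLinearMap
    (UniformSpace.Completion.isUniformInducing_coe E).isInducing
    UniformSpace.Completion.denseRange_coe
  exact ⟨e.finiteDimensional, e.finrank_eq.symm.trans hn⟩
end

section
/- Let Ω be a completely regular Hausdorff topological space and Y a sublattice of C(Ω) with the compact-open topology. Then the closure of Y equals the set of all f in C(Ω) such that for every pair of points s, t in Ω there exists g in Y with f(s) = g(s) and f(t) = g(t). -/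
/-!
A function in the closure of `Y` takes at each pair `(s, t)` a value of the finite-dimensional,
hence closed, subspace `{(g s, g t) | g ∈ Y}` of `ℝ²`. Conversely, if `f` is interpolated by `Y`
at every pair of points, Kakutani's argument approximates `f` uniformly on a compact set `K`:
for fixed `x`, finitely many sups of interpolants give `h_x ∈ Y` with `h_x > f - ε` on `K` and
`h_x x < f x + ε`, and a finite inf of the `h_x` is then `ε`-close to `f` on `K`.
-/

open Topology

theorem Submodule.map_mem_of_mem_closure {𝕜 E F : Type*} [NontriviallyNormedField 𝕜]
    [CompleteSpace 𝕜] [AddCommGroup E] [Module 𝕜 E] [TopologicalSpace E] [AddCommGroup F]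
    [Module 𝕜 F] [TopologicalSpace F] [IsTopologicalAddGroup F] [ContinuousSMul 𝕜 F]
    [T2Space F] [FiniteDimensional 𝕜 F] (Y : Submodule 𝕜 E) (e : E →L[𝕜] F) {x : E}
    (hx : x ∈ closure (Y : Set E)) : e x ∈ Y.map (e : E →ₗ[𝕜] F) := by
  rw [← SetLike.mem_coe, ← (Y.map (e : E →ₗ[𝕜] F)).closed_of_finiteDimensional.closure_eq]
  exact map_mem_closure e.continuous hx fun y hy => Submodule.mem_map_of_mem hy

namespace ContinuousMap

variable {Ω : Type*} [TopologicalSpace Ω]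

theorem hasBasis_nhds_compactConvergence_dist (f : C(Ω, ℝ)) :
    (𝓝 f).HasBasis (fun p : Set Ω × ℝ => IsCompact p.1 ∧ 0 < p.2)
      fun p => {g | ∀ x ∈ p.1, dist (f x) (g x) < p.2} := by
  simpa [UniformSpace.ball] using nhds_basis_uniformity'
    (Metric.uniformity_basis_dist.compactConvergenceUniformity (α := Ω)) (x := f)

theorem exists_forall_lt_of_sup_mem {L : Set C(Ω, ℝ)} (hL : L.Nonempty)
    (hsup : ∀ f ∈ L, ∀ g ∈ L, f ⊔ g ∈ L) {K : Set Ω} (hK : IsCompact K) (u : C(Ω, ℝ))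
    (hu : ∀ y ∈ K, ∃ g ∈ L, u y < g y) : ∃ h ∈ L, ∀ z ∈ K, u z < h z := by
  refine hK.induction_on (p := fun s => ∃ h ∈ L, ∀ z ∈ s, u z < h z)
    ⟨hL.some, hL.some_mem, by simp⟩ ?_ ?_ ?_
  · rintro s t hst ⟨h, hh, ht⟩
    exact ⟨h, hh, fun z hz => ht z (hst hz)⟩
  · rintro s t ⟨h₁, hh₁, hs⟩ ⟨h₂, hh₂, ht⟩
    refine ⟨h₁ ⊔ h₂, hsup _ hh₁ _ hh₂, fun z hz => ?_⟩
    rw [sup_apply, lt_sup_iff]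
    exact hz.imp (hs z) (ht z)
  · intro y hy
    obtain ⟨g, hg, hgy⟩ := hu y hy
    exact ⟨{z | u z < g z}, mem_nhdsWithin_of_mem_nhds
      ((isOpen_lt u.continuous g.continuous).mem_nhds hgy), g, hg, fun z hz => hz⟩

theorem exists_forall_gt_of_inf_mem {L : Set C(Ω, ℝ)} (hL : L.Nonempty)
    (hinf : ∀ f ∈ L, ∀ g ∈ L, f ⊓ g ∈ L) {K : Set Ω} (hK : IsCompact K) (v : C(Ω, ℝ))
    (hv : ∀ y ∈ K, ∃ g ∈ L, g y < v y) : ∃ h ∈ L, ∀ z ∈ K, h z < v z := by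
  refine hK.induction_on (p := fun s => ∃ h ∈ L, ∀ z ∈ s, h z < v z)
    ⟨hL.some, hL.some_mem, by simp⟩ ?_ ?_ ?_
  · rintro s t hst ⟨h, hh, ht⟩
    exact ⟨h, hh, fun z hz => ht z (hst hz)⟩
  · rintro s t ⟨h₁, hh₁, hs⟩ ⟨h₂, hh₂, ht⟩
    refine ⟨h₁ ⊓ h₂, hinf _ hh₁ _ hh₂, fun z hz => ?_⟩
    rw [inf_apply, inf_lt_iff]
    exact hz.imp (hs z) (ht z)
  · intro y hy
    obtain ⟨g, hg, hgy⟩ := hv y hy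
    exact ⟨{z | g z < v z}, mem_nhdsWithin_of_mem_nhds
      ((isOpen_lt g.continuous v.continuous).mem_nhds hgy), g, hg, fun z hz => hz⟩

theorem exists_forall_dist_lt_of_interpolates {L : Set C(Ω, ℝ)} (hL : L.Nonempty)
    (hsup : ∀ f ∈ L, ∀ g ∈ L, f ⊔ g ∈ L) (hinf : ∀ f ∈ L, ∀ g ∈ L, f ⊓ g ∈ L) {f : C(Ω, ℝ)}
    (hf : ∀ s t, ∃ g ∈ L, f s = g s ∧ f t = g t) {K : Set Ω} (hK : IsCompact K) {ε : ℝ}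
    (hε : 0 < ε) : ∃ g ∈ L, ∀ x ∈ K, dist (f x) (g x) < ε := by
  have upper : ∀ x, ∃ h ∈ L, h x < f x + ε ∧ ∀ z ∈ K, f z - ε < h z := by
    intro x
    obtain ⟨g₀, hg₀, hg₀x, -⟩ := hf x x
    obtain ⟨h, ⟨hh, hhx⟩, hhK⟩ := exists_forall_lt_of_sup_mem
      (L := {g ∈ L | g x < f x + ε}) ⟨g₀, hg₀, by linarith⟩
      (fun a ha b hb => ⟨hsup a ha.1 b hb.1, max_lt ha.2 hb.2⟩) hK (f - const Ω ε)
      fun y _ => by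
        obtain ⟨g, hg, hgx, hgy⟩ := hf x y
        exact ⟨g, ⟨hg, by linarith⟩, by simp only [sub_apply, const_apply]; linarith⟩
    exact ⟨h, hh, hhx, fun z hz => by simpa using hhK z hz⟩
  rcases K.eq_empty_or_nonempty with rfl | ⟨x₀, hx₀⟩
  · exact ⟨hL.some, hL.some_mem, by simp⟩
  obtain ⟨h₀, hh₀, -, hh₀K⟩ := upper x₀
  obtain ⟨k, ⟨hk, hkK⟩, hk_lt⟩ := exists_forall_gt_of_inf_mem
    (L := {k ∈ L | ∀ z ∈ K, f z - ε < k z}) ⟨h₀, hh₀, hh₀K⟩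
    (fun a ha b hb => ⟨hinf a ha.1 b hb.1, fun z hz => lt_min (ha.2 z hz) (hb.2 z hz)⟩)
    hK (f + const Ω ε) fun y _ => by
      obtain ⟨h, hh, hhy, hhK⟩ := upper y
      exact ⟨h, ⟨hh, hhK⟩, by simpa using hhy⟩
  refine ⟨k, hk, fun z hz => ?_⟩
  have hkz : k z < f z + ε := by simpa using hk_lt z hz
  rw [Real.dist_eq, abs_sub_lt_iff]
  constructor <;> linarith [hkK z hz]

end ContinuousMap

open ContinuousMap

theorem stmt1_general {Ω : Type*} [TopologicalSpace Ω]
    (Y : Submodule ℝ C(Ω, ℝ)) (hlat : ∀ f ∈ Y, ∀ g ∈ Y, f ⊔ g ∈ Y) :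
    closure (Y : Set C(Ω, ℝ)) =
      {f : C(Ω, ℝ) | ∀ s t : Ω, ∃ g ∈ Y, f s = g s ∧ f t = g t} := by
  ext f
  constructor
  · intro hf s t
    obtain ⟨g, hg, hgf⟩ :=
      Y.map_mem_of_mem_closure ((evalCLM ℝ s).prod (evalCLM ℝ t)) hf
    simp only [ContinuousLinearMap.coe_coe, ContinuousLinearMap.prod_apply, evalCLM_apply,
      Prod.mk.injEq] at hgf
    exact ⟨g, hg, hgf.1.symm, hgf.2.symm⟩
  · intro hf
    have hinf : ∀ a ∈ Y, ∀ b ∈ Y, a ⊓ b ∈ Y := fun a ha b hb => by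
      rw [← neg_neg (a ⊓ b), neg_inf]
      exact Y.neg_mem (hlat _ (Y.neg_mem ha) _ (Y.neg_mem hb))
    rw [mem_closure_iff_nhds_basis (hasBasis_nhds_compactConvergence_dist f)]
    rintro ⟨K, ε⟩ ⟨hK, hε⟩
    exact exists_forall_dist_lt_of_interpolates ⟨0, Y.zero_mem⟩ hlat hinf hf hK hε

/-- The closure (compact-open topology) of a sublattice `Y` of `C(Ω)` is the set of all
`f` that agree with some element of `Y` at every pair of points. -/
theorem stmt1 {Ω : Type*} [TopologicalSpace Ω] [T2Space Ω] [CompletelyRegularSpace Ω]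
    (Y : Submodule ℝ C(Ω, ℝ)) (hlat : ∀ f ∈ Y, ∀ g ∈ Y, f ⊔ g ∈ Y) :
    closure (Y : Set C(Ω, ℝ)) =
      {f : C(Ω, ℝ) | ∀ s t : Ω, ∃ g ∈ Y, f s = g s ∧ f t = g t} :=
  stmt1_general Y hlat
end

section
/- Let Ω be a completely regular Hausdorff space and Y a sublattice of C(Ω). Then the closure of Y (in the compact-open topology) equals the set of all f in C(Ω) such that for every finite subset F of Ω there exists g in Y agreeing with f on F. -/
/-!
If `f` lies in the closure of `Y`, then its values on a finite set `F` lie in the closure of the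
image of `Y` under evaluation at `F`, a finite-dimensional and hence closed subspace of `ℝ^F`.
Conversely, if `f` agrees with members of `Y` at every pair of points, then for a compact `K` and
`ε > 0` one first takes, for each `x ∈ K`, a finite supremum of members of `Y` equal to `f` at `x`
and exceeding `f - ε` on `K`, and then a finite infimum of these which stays below `f + ε` on `K`
(Kakutani–Krein).
-/

open Set

section CompactCover

variable {X β : Type*} [TopologicalSpace X] [LinearOrder β] [TopologicalSpace β]
  [OrderClosedTopology β] {K : Set X}

theorem SupClosed.exists_mem_forall_lt_of_isCompact {S : Set C(X, β)} (hS : SupClosed S)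
    (hK : IsCompact K) (hKne : K.Nonempty) (φ : C(X, β))
    (h : ∀ y ∈ K, ∃ g ∈ S, φ y < g y) : ∃ g ∈ S, ∀ z ∈ K, φ z < g z := by
  choose g hgS hg using fun y : K => h y y.2
  obtain ⟨t, hcover⟩ := hK.elim_finite_subcover (fun y => {z | φ z < g y z})
    (fun y => isOpen_lt (by fun_prop) (by fun_prop))
    fun y hy => mem_iUnion.mpr ⟨⟨y, hy⟩, hg ⟨y, hy⟩⟩
  have ht : t.Nonempty := by
    obtain ⟨z, hz⟩ := hKne
    obtain ⟨y, hy, -⟩ := mem_iUnion₂.mp (hcover hz)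
    exact ⟨y, hy⟩
  refine ⟨t.sup' ht g, hS.finsetSup'_mem ht fun y _ => hgS y, fun z hz => ?_⟩
  obtain ⟨y, hy, hzy⟩ := mem_iUnion₂.mp (hcover hz)
  rw [ContinuousMap.sup'_apply, Finset.lt_sup'_iff]
  exact ⟨y, hy, hzy⟩

theorem InfClosed.exists_mem_forall_gt_of_isCompact {S : Set C(X, β)} (hS : InfClosed S)
    (hK : IsCompact K) (hKne : K.Nonempty) (ψ : C(X, β))
    (h : ∀ y ∈ K, ∃ g ∈ S, g y < ψ y) : ∃ g ∈ S, ∀ z ∈ K, g z < ψ z := by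
  choose g hgS hg using fun y : K => h y y.2
  obtain ⟨t, hcover⟩ := hK.elim_finite_subcover (fun y => {z | g y z < ψ z})
    (fun y => isOpen_lt (by fun_prop) (by fun_prop))
    fun y hy => mem_iUnion.mpr ⟨⟨y, hy⟩, hg ⟨y, hy⟩⟩
  have ht : t.Nonempty := by
    obtain ⟨z, hz⟩ := hKne
    obtain ⟨y, hy, -⟩ := mem_iUnion₂.mp (hcover hz)
    exact ⟨y, hy⟩
  refine ⟨t.inf' ht g, hS.finsetInf'_mem ht fun y _ => hgS y, fun z hz => ?_⟩
  obtain ⟨y, hy, hzy⟩ := mem_iUnion₂.mp (hcover hz)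
  rw [ContinuousMap.inf'_apply, Finset.inf'_lt_iff]
  exact ⟨y, hy, hzy⟩

end CompactCover

theorem exists_mem_forall_dist_lt_of_eq_on_pairs {X : Type*} [TopologicalSpace X]
    {L : Set C(X, ℝ)} (hsup : SupClosed L) (hinf : InfClosed L) (hL : L.Nonempty)
    {K : Set X} (hK : IsCompact K) {f : C(X, ℝ)}
    (hf : ∀ x ∈ K, ∀ y ∈ K, ∃ g ∈ L, g x = f x ∧ g y = f y) {ε : ℝ} (hε : 0 < ε) :
    ∃ g ∈ L, ∀ z ∈ K, dist (f z) (g z) < ε := by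
  rcases K.eq_empty_or_nonempty with rfl | hKne
  · obtain ⟨g, hg⟩ := hL
    exact ⟨g, hg, by simp⟩
  have above : ∀ x ∈ K, ∃ g ∈ L ∩ {g | ∀ z ∈ K, f z - ε < g z}, g x < f x + ε := by
    intro x hx
    have hS : SupClosed (L ∩ {g | g x = f x}) :=
      hsup.inter fun g hg h hh => by simp_all
    obtain ⟨g, ⟨hgL, hgx : g x = f x⟩, hg⟩ := hS.exists_mem_forall_lt_of_isCompact hK hKne
      (f - ContinuousMap.const X ε) fun y hy => by
        obtain ⟨g, hgL, hgx, hgy⟩ := hf x hx y hy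
        exact ⟨g, ⟨hgL, hgx⟩, by simp [hgy, hε]⟩
    exact ⟨g, ⟨hgL, fun z hz => by simpa using hg z hz⟩, by linarith⟩
  have hS : InfClosed (L ∩ {g | ∀ z ∈ K, f z - ε < g z}) :=
    hinf.inter fun g hg h hh z hz => lt_inf_iff.mpr ⟨hg z hz, hh z hz⟩
  obtain ⟨g, ⟨hgL, hlow⟩, hup⟩ :=
    hS.exists_mem_forall_gt_of_isCompact hK hKne (f + ContinuousMap.const X ε) fun x hx => by
      simpa using above x hx
  refine ⟨g, hgL, fun z hz => ?_⟩
  have hgz : g z < f z + ε := by simpa using hup z hz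
  rw [Real.dist_eq, abs_sub_lt_iff]
  exact ⟨by linarith [hlow z hz], by linarith⟩

theorem Submodule.mem_map_of_mem_closure {E F : Type*} [AddCommGroup E] [TopologicalSpace E]
    [Module ℝ E] [AddCommGroup F] [TopologicalSpace F] [IsTopologicalAddGroup F] [Module ℝ F]
    [ContinuousSMul ℝ F] [T2Space F] [FiniteDimensional ℝ F] (π : E →L[ℝ] F)
    (Y : Submodule ℝ E) {f : E} (hf : f ∈ closure (Y : Set E)) : π f ∈ Y.map (π : E →ₗ[ℝ] F) := by
  have hclosed := (Y.map (π : E →ₗ[ℝ] F)).closed_of_finiteDimensional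
  rw [← SetLike.mem_coe, ← hclosed.closure_eq, Submodule.map_coe]
  exact image_closure_subset_closure_image π.continuous ⟨f, hf, rfl⟩

theorem AddSubgroup.infClosed_of_supClosed {G : Type*} [Lattice G] [AddGroup G] [AddLeftMono G]
    [AddRightMono G] (H : AddSubgroup G) (hH : SupClosed (H : Set G)) : InfClosed (H : Set G) :=
  fun a ha b hb => by
    simpa [neg_sup] using H.neg_mem (hH (H.neg_mem ha) (H.neg_mem hb))

theorem stmt2_general {Ω : Type*} [TopologicalSpace Ω]
    (Y : Submodule ℝ C(Ω, ℝ)) (hlat : ∀ f ∈ Y, ∀ g ∈ Y, f ⊔ g ∈ Y) :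
    closure (Y : Set C(Ω, ℝ)) =
      {f : C(Ω, ℝ) | ∀ F : Finset Ω, ∃ g ∈ Y, ∀ t ∈ F, f t = g t} := by
  ext f
  constructor
  · intro hf F
    obtain ⟨g, hgY, hgf⟩ := Y.mem_map_of_mem_closure
      (ContinuousLinearMap.pi fun t : F => ContinuousMap.evalCLM ℝ (t : Ω)) hf
    exact ⟨g, hgY, fun t ht => (congrFun hgf ⟨t, ht⟩).symm⟩
  · intro hf
    have hsup : SupClosed (Y : Set C(Ω, ℝ)) := hlat
    have hb := (Metric.uniformity_basis_dist (α := ℝ)).compactConvergenceUniformity (α := Ω)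
    rw [mem_closure_iff_nhds_basis (nhds_basis_uniformity' hb)]
    rintro ⟨K, ε⟩ ⟨hK, hε⟩
    classical
    exact exists_mem_forall_dist_lt_of_eq_on_pairs hsup
      (Y.toAddSubgroup.infClosed_of_supClosed hsup) ⟨0, Y.zero_mem⟩ hK
      (fun x _ y _ => by
        obtain ⟨g, hgY, hgf⟩ := hf {x, y}
        exact ⟨g, hgY, (hgf x (by simp)).symm, (hgf y (by simp)).symm⟩) hε

/-- The closure (compact-open topology) of a sublattice `Y` of `C(Ω)` is the set of all
`f` that agree with some element of `Y` on every finite set of points. -/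
theorem stmt2 {Ω : Type*} [TopologicalSpace Ω] [T2Space Ω] [CompletelyRegularSpace Ω]
    (Y : Submodule ℝ C(Ω, ℝ)) (hlat : ∀ f ∈ Y, ∀ g ∈ Y, f ⊔ g ∈ Y) :
    closure (Y : Set C(Ω, ℝ)) =
      {f : C(Ω, ℝ) | ∀ F : Finset Ω, ∃ g ∈ Y, ∀ t ∈ F, f t = g t} :=
  stmt2_general Y hlat
end

section
/- Every closed sublattice of C(Ω) of codimension one is either of the form {f ∈ C(Ω) : f(s) = 0} for some s ∈ Ω, or of the form {f ∈ C(Ω) : f(s) = α f(t)} for some distinct s, t ∈ Ω and some α > 0. -/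
open Filter Topology

-- urysohn helper
lemma aux_ury {Ω : Type*} [TopologicalSpace Ω] [CompletelyRegularSpace Ω] {x : Ω} {C : Set Ω}
    (hC : IsClosed C) (hx : x ∉ C) :
    ∃ g : C(Ω,ℝ), g x = 1 ∧ (∀ y ∈ C, g y = 0) ∧ ∀ y, 0 ≤ g y := by
  obtain ⟨f, hf, hfx, hfC⟩ := CompletelyRegularSpace.completely_regular x C hC hx
  refine ⟨⟨fun y => 1 - (f y : ℝ), by continuity⟩, by simp [hfx], fun y hy => by simp [hfC hy],
    fun y => by simpa using (f y).2.2⟩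

lemma aux_key {Ω : Type*} [TopologicalSpace Ω] [CompletelyRegularSpace Ω]
    (Y : Submodule ℝ C(Ω,ℝ)) (hclosed : IsClosed (Y : Set C(Ω,ℝ)))
    (K : Set Ω) (hKc : IsCompact K) (hK : ∀ f : C(Ω,ℝ), (∀ x ∈ K, f x = 0) → f ∈ Y)
    (S : Set Ω)
    (hS : ∀ z ∉ S, ∃ U ∈ 𝓝 z, ∀ f : C(Ω,ℝ), (∀ y ∉ U, f y = 0) → f ∈ Y)
    (f : C(Ω,ℝ)) (hf : ∀ x ∈ S, f x = 0) : f ∈ Y := by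
  -- clamp function
  set clamp : ℝ → C(Ω,ℝ) := fun ε => (f ⊓ ContinuousMap.const Ω ε) ⊔ ContinuousMap.const Ω (-ε)
    with hclamp
  have hclamp_abs : ∀ ε > 0, ∀ x, |clamp ε x| ≤ ε := by
    intro ε hε x
    rw [abs_le]
    constructor
    · exact le_sup_right
    · rw [hclamp]
      simp only [ContinuousMap.sup_apply, ContinuousMap.inf_apply, ContinuousMap.const_apply]
      exact sup_le inf_le_right (by linarith)
  have hclamp_eq : ∀ ε > 0, ∀ x, |f x| ≤ ε → clamp ε x = f x := by
    intro ε hε x hx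
    rw [abs_le] at hx
    rw [hclamp]
    simp only [ContinuousMap.sup_apply, ContinuousMap.inf_apply, ContinuousMap.const_apply]
    rw [inf_eq_left.2 hx.2, sup_eq_left.2 hx.1]
  -- main step: f - clamp ε f ∈ Y for every ε > 0
  have main : ∀ ε > 0, f - clamp ε ∈ Y := by
    intro ε hε
    set Cε : Set Ω := {y ∈ K | ε ≤ |f y|} with hCε
    have hCεc : IsCompact Cε := by
      apply hKc.inter_right
      exact isClosed_le continuous_const f.continuous.abs
    -- local kill data for points not in S
    classical
    choose U hU hUkill using hS
    -- for each z ∉ S, an open O ∋ z inside U and a bump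
    have hbump : ∀ z (hz : z ∉ S), ∃ (O : Set Ω) (g : C(Ω,ℝ)), IsOpen O ∧ z ∈ O ∧
        O ⊆ U z hz ∧ g z = 1 ∧ (∀ y ∉ O, g y = 0) ∧ ∀ y, 0 ≤ g y := by
      intro z hz
      obtain ⟨O, hOsub, hOopen, hzO⟩ := mem_nhds_iff.1 (hU z hz)
      obtain ⟨g, hg1, hg0, hgpos⟩ := aux_ury (C := Oᶜ) hOopen.isClosed_compl (by simpa using hzO)
      exact ⟨O, g, hOopen, hzO, hOsub, hg1, fun y hy => hg0 y hy, hgpos⟩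
    choose O g hOopen hzO hOU hg1 hg0 hgpos using hbump
    -- cover Cε
    have hCεS : ∀ z ∈ Cε, z ∉ S := by
      intro z hz hzS
      have := hf z hzS
      rw [hCε] at hz
      have := hz.2
      rw [hf z hzS] at this
      simp at this
      linarith
    have hcover : Cε ⊆ ⋃ i : {z : Ω // z ∉ S}, {y | 1/2 < g i.1 i.2 y} := by
      intro z hz
      exact Set.mem_iUnion.2 ⟨⟨z, hCεS z hz⟩, by simp [hg1]; norm_num⟩
    obtain ⟨t, ht⟩ := hCεc.elim_finite_subcover _
      (fun i : {z : Ω // z ∉ S} => (isOpen_lt continuous_const (g i.1 i.2).continuous)) hcover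
    set G : C(Ω,ℝ) := ∑ i ∈ t, g i.1 i.2 with hG
    have hGpos : ∀ y, 0 ≤ G y := by
      intro y
      rw [hG, ContinuousMap.sum_apply]
      exact Finset.sum_nonneg fun i _ => hgpos i.1 i.2 y
    have hGbig : ∀ y ∈ Cε, 1/2 < G y := by
      intro y hy
      obtain ⟨i, hit, hiy⟩ := Set.mem_iUnion₂.1 (ht hy)
      calc (1:ℝ)/2 < g i.1 i.2 y := hiy
        _ ≤ G y := by
          rw [hG, ContinuousMap.sum_apply]
          exact Finset.single_le_sum (fun j _ => hgpos j.1 j.2 y) hit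
    set w : C(Ω,ℝ) := G ⊔ ContinuousMap.const Ω (1/2) with hw
    have hwpos : ∀ y, (0:ℝ) < w y := fun y =>
      lt_of_lt_of_le (by norm_num) (le_sup_right : _ ≤ (G ⊔ ContinuousMap.const Ω (1/2)) y)
    set inv : C(Ω,ℝ) := ⟨fun y => (w y)⁻¹, w.continuous.inv₀ fun y => (hwpos y).ne'⟩ with hinv
    set d : C(Ω,ℝ) := f - clamp ε with hd
    have hd0 : ∀ y, |f y| ≤ ε → d y = 0 := by
      intro y hy
      rw [hd, ContinuousMap.sub_apply, hclamp_eq ε hε y hy, sub_self]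
    have hdec : d = (∑ i ∈ t, d * g i.1 i.2 * inv) + d * (1 - G * inv) := by
      ext y
      simp only [ContinuousMap.add_apply, ContinuousMap.sum_apply, ContinuousMap.mul_apply,
        ContinuousMap.sub_apply, ContinuousMap.one_apply]
      have hss : ∑ i ∈ t, d y * (g i.1 i.2) y * inv y = d y * G y * inv y := by
        rw [hG, ContinuousMap.sum_apply, Finset.mul_sum, Finset.sum_mul]
      rw [hss]
      ring
    rw [hdec]
    apply Y.add_mem
    · apply Submodule.sum_mem
      intro i hit
      apply hUkill i.1 i.2
      intro y hy
      have : g i.1 i.2 y = 0 := hg0 i.1 i.2 y (fun hO => hy (hOU i.1 i.2 hO))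
      simp [this]
    · apply hK
      intro y hyK
      by_cases hcase : ε ≤ |f y|
      · have : y ∈ Cε := ⟨hyK, hcase⟩
        have h1 : w y = G y := by
          rw [hw]
          exact sup_eq_left.2 (le_of_lt (hGbig y this))
        have h2 : G y * inv y = 1 := by
          rw [hinv]
          show G y * (w y)⁻¹ = 1
          rw [h1]
          exact mul_inv_cancel₀ (by have := hGbig y this; linarith)
        simp [h2]
      · simp [hd0 y (le_of_not_ge hcase)]
  -- now pass to the limit
  have htend : Tendsto (fun n : ℕ => f - clamp (1/(n+1))) atTop (𝓝 f) := by
    have h0 : Tendsto (fun n : ℕ => clamp (1/(n+1))) atTop (𝓝 0) := by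
      rw [ContinuousMap.tendsto_iff_forall_isCompact_tendstoUniformlyOn]
      intro K₀ hK₀
      rw [Metric.tendstoUniformlyOn_iff]
      intro δ hδ
      obtain ⟨n₀, hn₀⟩ := exists_nat_one_div_lt hδ
      filter_upwards [eventually_ge_atTop n₀] with n hn x _
      rw [ContinuousMap.zero_apply, Real.dist_eq]
      simp only [zero_sub, abs_neg]
      calc |clamp (1/(n+1)) x| ≤ 1/(n+1) := hclamp_abs _ (by positivity) x
        _ ≤ 1/(n₀+1) := by
          apply one_div_le_one_div_of_le (by positivity)
          exact_mod_cast Nat.add_le_add_right hn 1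
        _ < δ := hn₀
    simpa using tendsto_const_nhds.sub h0
  exact hclosed.mem_of_tendsto htend
    (Eventually.of_forall fun n => main (1/(n+1)) (by positivity))

section Aux
variable {Ω : Type*} [TopologicalSpace Ω]

/-- Disjointly supported nonnegative functions cannot both have positive value
under a functional whose kernel is a sublattice. -/
lemma aux_L1 (Y : Submodule ℝ C(Ω,ℝ)) (hlat : ∀ f ∈ Y, ∀ g ∈ Y, f ⊔ g ∈ Y)
    (ψ : C(Ω,ℝ) →ₗ[ℝ] ℝ) (hmem : ∀ f, f ∈ Y ↔ ψ f = 0)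
    (f g : C(Ω,ℝ)) (hf : ∀ y, 0 ≤ f y) (hg : ∀ y, 0 ≤ g y)
    (hdisj : ∀ y, f y = 0 ∨ g y = 0) (hψf : 0 < ψ f) (hψg : 0 < ψ g) : False := by
  set h : C(Ω,ℝ) := ψ g • f - ψ f • g with hh
  have hhY : h ∈ Y := by
    rw [hmem, hh, map_sub, map_smul, map_smul, smul_eq_mul, smul_eq_mul, mul_comm]
    ring
  have hsup : h ⊔ 0 ∈ Y := hlat h hhY 0 Y.zero_mem
  have hkey : h ⊔ 0 = ψ g • f := by
    ext y
    simp only [ContinuousMap.sup_apply, ContinuousMap.zero_apply, hh,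
      ContinuousMap.sub_apply, ContinuousMap.smul_apply, smul_eq_mul]
    rcases hdisj y with h0 | h0
    · have hgy : 0 ≤ ψ f * g y := mul_nonneg hψf.le (hg y)
      rw [h0, show ψ g * 0 - ψ f * g y = -(ψ f * g y) by ring,
        sup_eq_right.2 (by linarith), mul_zero]
    · have hfy : 0 ≤ ψ g * f y := mul_nonneg hψg.le (hf y)
      rw [h0, show ψ g * f y - ψ f * 0 = ψ g * f y by ring]
      exact sup_eq_left.2 (by linarith)
  rw [hkey, hmem, map_smul, smul_eq_mul] at hsup
  nlinarith

/-- Two-point representation with two positive coefficients contradicts the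
sublattice property. -/
lemma aux_sgn (Y : Submodule ℝ C(Ω,ℝ)) (hlat : ∀ f ∈ Y, ∀ g ∈ Y, f ⊔ g ∈ Y)
    (ψ : C(Ω,ℝ) →ₗ[ℝ] ℝ) (hmem : ∀ f, f ∈ Y ↔ ψ f = 0)
    (x t : Ω) (e₁ e₂ : C(Ω,ℝ))
    (h1x : e₁ x = 1) (h1t : e₁ t = 0) (h2x : e₂ x = 0) (h2t : e₂ t = 1)
    (a b : ℝ) (ha : 0 < a) (hb : 0 < b)
    (hrep : ∀ f : C(Ω,ℝ), ψ f = a * f x + b * f t) : False := by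
  set h : C(Ω,ℝ) := b • e₁ - a • e₂ with hh
  have hhY : h ∈ Y := by
    rw [hmem, hrep]
    simp [hh, h1x, h1t, h2x, h2t]
    ring
  have hsup : h ⊔ 0 ∈ Y := hlat h hhY 0 Y.zero_mem
  rw [hmem, hrep] at hsup
  have hx' : (h ⊔ 0) x = b := by
    simp only [ContinuousMap.sup_apply, ContinuousMap.zero_apply, hh,
      ContinuousMap.sub_apply, ContinuousMap.smul_apply, smul_eq_mul, h1x, h2x]
    rw [mul_one, mul_zero, sub_zero]
    exact sup_eq_left.2 hb.le
  have ht' : (h ⊔ 0) t = 0 := by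
    simp only [ContinuousMap.sup_apply, ContinuousMap.zero_apply, hh,
      ContinuousMap.sub_apply, ContinuousMap.smul_apply, smul_eq_mul, h1t, h2t]
    rw [mul_one, mul_zero, zero_sub]
    exact sup_eq_right.2 (by linarith)
  rw [hx', ht', mul_zero, add_zero] at hsup
  nlinarith

end Aux

/-- Every closed sublattice of `C(Ω)` of codimension one is either
`{f : f s = 0}` for some `s`, or `{f : f s = α f t}` for some `s ≠ t` and `α > 0`. -/
theorem stmt3 {Ω : Type*} [TopologicalSpace Ω] [T2Space Ω] [CompletelyRegularSpace Ω]
    (Y : Submodule ℝ C(Ω, ℝ)) (hlat : ∀ f ∈ Y, ∀ g ∈ Y, f ⊔ g ∈ Y)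
    (hclosed : IsClosed (Y : Set C(Ω, ℝ)))
    (hcodim : Module.finrank ℝ (C(Ω, ℝ) ⧸ Y) = 1) :
    (∃ s : Ω, (Y : Set C(Ω, ℝ)) = {f : C(Ω, ℝ) | f s = 0}) ∨
      (∃ s t : Ω, ∃ α : ℝ, s ≠ t ∧ 0 < α ∧
        (Y : Set C(Ω, ℝ)) = {f : C(Ω, ℝ) | f s = α * f t}) := by
  classical
  -- the defining functional
  obtain ⟨φ, hker, e, he⟩ : ∃ φ : C(Ω,ℝ) →ₗ[ℝ] ℝ, LinearMap.ker φ = Y ∧ ∃ e, φ e = 1 := by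
    haveI : FiniteDimensional ℝ (C(Ω,ℝ) ⧸ Y) := .of_finrank_eq_succ hcodim
    obtain ⟨ε⟩ := FiniteDimensional.nonempty_linearEquiv_of_finrank_eq
      (hcodim.trans (Module.finrank_self ℝ).symm)
    refine ⟨ε.toLinearMap ∘ₗ Y.mkQ, ?_, ?_⟩
    · rw [LinearMap.ker_comp, LinearEquiv.ker, Submodule.comap_bot, Submodule.ker_mkQ]
    · obtain ⟨q, hq⟩ := ε.surjective 1
      obtain ⟨e, rfl⟩ := Y.mkQ_surjective q
      exact ⟨e, hq⟩
  have hmem : ∀ f, f ∈ Y ↔ φ f = 0 := fun f => by rw [← hker]; rfl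
  have hmemneg : ∀ f, f ∈ Y ↔ (-φ) f = 0 := fun f => by
    rw [hmem]; simp
  -- compact support of the functional
  obtain ⟨K, hKc, hK⟩ : ∃ K : Set Ω, IsCompact K ∧
      ∀ f : C(Ω,ℝ), (∀ x ∈ K, f x = 0) → f ∈ Y := by
    by_contra hcon
    push_neg at hcon
    letI σ : Type _ := {K : Set Ω // IsCompact K}
    letI : SemilatticeSup σ :=
      { le := fun A B => A.1 ⊆ B.1
        le_refl := fun A => subset_rfl
        le_trans := fun A B C h1 h2 => h1.trans h2
        le_antisymm := fun A B h1 h2 => Subtype.ext (Set.Subset.antisymm h1 h2)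
        sup := fun A B => ⟨A.1 ∪ B.1, A.2.union B.2⟩
        le_sup_left := fun A B => Set.subset_union_left
        le_sup_right := fun A B => Set.subset_union_right
        sup_le := fun A B C h1 h2 => Set.union_subset h1 h2 }
    haveI : Nonempty σ := ⟨⟨∅, isCompact_empty⟩⟩
    choose F hF1 hF2 using fun K : σ => hcon K.1 K.2
    have hφF : ∀ K, φ (F K) ≠ 0 := fun K hz => hF2 K ((hmem (F K)).2 hz)
    have hu : ∀ K : σ, e - (φ (F K))⁻¹ • F K ∈ Y := by
      intro K
      rw [hmem]
      simp [he, inv_mul_cancel₀ (hφF K)]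
    have htend : Tendsto (fun K : σ => (φ (F K))⁻¹ • F K) atTop (𝓝 0) := by
      rw [ContinuousMap.tendsto_iff_forall_isCompact_tendstoUniformlyOn]
      intro K₀ hK₀ V hV
      filter_upwards [eventually_ge_atTop (⟨K₀, hK₀⟩ : σ)] with K hKge x hx
      have : F K x = 0 := hF1 K x (hKge hx)
      simp only [ContinuousMap.smul_apply, this, smul_zero, ContinuousMap.zero_apply]
      exact refl_mem_uniformity hV
    have htend2 : Tendsto (fun K : σ => e - (φ (F K))⁻¹ • F K) atTop (𝓝 e) := by
      simpa using tendsto_const_nhds.sub htend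
    have : e ∈ Y := hclosed.mem_of_tendsto htend2 (Eventually.of_forall hu)
    rw [hmem] at this
    simp [he] at this
  -- the support set
  set S : Set Ω := {x | ∀ U ∈ 𝓝 x, ∃ f : C(Ω,ℝ), (∀ y ∉ U, f y = 0) ∧ f ∉ Y} with hSdef
  have hSco : ∀ z ∉ S, ∃ U ∈ 𝓝 z, ∀ f : C(Ω,ℝ), (∀ y ∉ U, f y = 0) → f ∈ Y := by
    intro z hz
    rw [hSdef, Set.mem_setOf_eq] at hz
    push_neg at hz
    obtain ⟨U, hU, hU2⟩ := hz
    exact ⟨U, hU, fun f hf => hU2 f hf⟩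
  have KEY : ∀ f : C(Ω,ℝ), (∀ x ∈ S, f x = 0) → f ∈ Y :=
    aux_key Y hclosed K hKc hK S hSco
  -- S is nonempty
  obtain ⟨x, hxS⟩ : ∃ x, x ∈ S := by
    by_contra hcon
    push_neg at hcon
    have : e ∈ Y := KEY e (fun z hz => absurd hz (hcon z))
    rw [hmem, he] at this
    exact one_ne_zero this
  -- sign sets
  set Pos : Set Ω := {p | ∀ U ∈ 𝓝 p, ∃ f : C(Ω,ℝ),
    (∀ y, 0 ≤ f y) ∧ (∀ y ∉ U, f y = 0) ∧ 0 < φ f} with hPosdef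
  set Neg : Set Ω := {p | ∀ U ∈ 𝓝 p, ∃ f : C(Ω,ℝ),
    (∀ y, 0 ≤ f y) ∧ (∀ y ∉ U, f y = 0) ∧ φ f < 0} with hNegdef
  have hPN : ∀ z ∈ S, z ∈ Pos ∨ z ∈ Neg := by
    intro z hz
    by_contra hcon
    push_neg at hcon
    obtain ⟨hp, hn⟩ := hcon
    rw [hPosdef, Set.mem_setOf_eq] at hp
    rw [hNegdef, Set.mem_setOf_eq] at hn
    push_neg at hp hn
    obtain ⟨U₁, hU₁, hU₁p⟩ := hp
    obtain ⟨U₂, hU₂, hU₂p⟩ := hn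
    obtain ⟨f, hfsupp, hfY⟩ := hz (U₁ ∩ U₂) (Filter.inter_mem hU₁ hU₂)
    set fp : C(Ω,ℝ) := f ⊔ 0 with hfp
    set fm : C(Ω,ℝ) := (-f) ⊔ 0 with hfm
    have hfp_pos : ∀ y, 0 ≤ fp y := fun y => le_sup_right
    have hfm_pos : ∀ y, 0 ≤ fm y := fun y => le_sup_right
    have hfp_supp : ∀ y ∉ U₁ ∩ U₂, fp y = 0 := by
      intro y hy
      simp [hfp, ContinuousMap.sup_apply, hfsupp y hy]
    have hfm_supp : ∀ y ∉ U₁ ∩ U₂, fm y = 0 := by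
      intro y hy
      simp [hfm, ContinuousMap.sup_apply, hfsupp y hy]
    have hsplit : φ f = φ fp - φ fm := by
      rw [← map_sub]
      congr 1
      ext y
      simp only [hfp, hfm, ContinuousMap.sub_apply, ContinuousMap.sup_apply,
        ContinuousMap.zero_apply, ContinuousMap.neg_apply]
      rcases le_total 0 (f y) with h | h
      · rw [sup_eq_left.2 h, sup_eq_right.2 (by linarith), sub_zero]
      · rw [sup_eq_right.2 h, sup_eq_left.2 (by linarith), zero_sub, neg_neg]
    have h1 : φ fp ≤ 0 := hU₁p fp hfp_pos (fun y hy => hfp_supp y (fun hy2 => hy hy2.1))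
    have h2 : 0 ≤ φ fp := hU₂p fp hfp_pos (fun y hy => hfp_supp y (fun hy2 => hy hy2.2))
    have h3 : φ fm ≤ 0 := hU₁p fm hfm_pos (fun y hy => hfm_supp y (fun hy2 => hy hy2.1))
    have h4 : 0 ≤ φ fm := hU₂p fm hfm_pos (fun y hy => hfm_supp y (fun hy2 => hy hy2.2))
    have : φ f = 0 := by rw [hsplit]; linarith
    exact hfY ((hmem f).2 this)
  have hPsub : ∀ p ∈ Pos, ∀ q ∈ Pos, p = q := by
    intro p hp q hq
    by_contra hne
    obtain ⟨U, V, hUo, hVo, hpU, hqV, hUV⟩ := t2_separation hne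
    obtain ⟨f, hf1, hf2, hf3⟩ := hp U (hUo.mem_nhds hpU)
    obtain ⟨g, hg1, hg2, hg3⟩ := hq V (hVo.mem_nhds hqV)
    refine aux_L1 Y hlat φ hmem f g hf1 hg1 (fun y => ?_) hf3 hg3
    by_cases hy : y ∈ U
    · exact Or.inr (hg2 y (Set.disjoint_left.1 hUV hy))
    · exact Or.inl (hf2 y hy)
  have hNsub : ∀ p ∈ Neg, ∀ q ∈ Neg, p = q := by
    intro p hp q hq
    by_contra hne
    obtain ⟨U, V, hUo, hVo, hpU, hqV, hUV⟩ := t2_separation hne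
    obtain ⟨f, hf1, hf2, hf3⟩ := hp U (hUo.mem_nhds hpU)
    obtain ⟨g, hg1, hg2, hg3⟩ := hq V (hVo.mem_nhds hqV)
    refine aux_L1 Y hlat (-φ) hmemneg f g hf1 hg1 (fun y => ?_)
      (by simpa using hf3) (by simpa using hg3)
    by_cases hy : y ∈ U
    · exact Or.inr (hg2 y (Set.disjoint_left.1 hUV hy))
    · exact Or.inl (hf2 y hy)
  -- case split on whether S has one or two points
  by_cases hone : ∀ z ∈ S, z = x
  · -- one-point case
    left
    refine ⟨x, ?_⟩
    have hrep : ∀ f : C(Ω,ℝ), φ f = f x * φ 1 := by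
      intro f
      have : f - f x • (1 : C(Ω,ℝ)) ∈ Y := by
        apply KEY
        intro z hz
        rw [hone z hz]
        simp
      rw [hmem] at this
      rw [map_sub, map_smul, smul_eq_mul] at this
      linarith
    have hc : φ 1 ≠ 0 := by
      intro h0
      have := hrep e
      rw [h0, mul_zero, he] at this
      exact one_ne_zero this
    ext f
    rw [SetLike.mem_coe, hmem, hrep f, Set.mem_setOf_eq, mul_eq_zero]
    constructor
    · rintro (h | h)
      · exact h
      · exact absurd h hc
    · exact fun h => Or.inl h
  · -- two-point case
    push_neg at hone
    obtain ⟨t, htS, htx⟩ := hone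
    have hxt : x ≠ t := fun h => htx h.symm
    -- S ⊆ {x, t}
    have hS2 : ∀ z ∈ S, z = x ∨ z = t := by
      intro z hz
      by_contra hcon
      push_neg at hcon
      obtain ⟨hzx, hzt⟩ := hcon
      rcases hPN z hz with hz' | hz' <;> rcases hPN x hxS with hx' | hx' <;>
        rcases hPN t htS with ht' | ht'
      · exact hzx (hPsub z hz' x hx')
      · exact hzx (hPsub z hz' x hx')
      · exact hzt (hPsub z hz' t ht')
      · exact hxt (hNsub x hx' t ht')
      · exact hxt (hPsub x hx' t ht')
      · exact hzt (hNsub z hz' t ht')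
      · exact hzx (hNsub z hz' x hx')
      · exact hzx (hNsub z hz' x hx')
    -- bump functions
    obtain ⟨e₁, he₁x, he₁t, he₁pos⟩ := aux_ury (Ω := Ω) (x := x) (C := {t})
      isClosed_singleton (by simpa using hxt)
    obtain ⟨e₂, he₂t, he₂x, he₂pos⟩ := aux_ury (Ω := Ω) (x := t) (C := {x})
      isClosed_singleton (by simpa using hxt.symm)
    have he₁t' : e₁ t = 0 := he₁t t rfl
    have he₂x' : e₂ x = 0 := he₂x x rfl
    set a : ℝ := φ e₁ with ha
    set b : ℝ := φ e₂ with hb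
    have hrep : ∀ f : C(Ω,ℝ), φ f = a * f x + b * f t := by
      intro f
      have : f - f x • e₁ - f t • e₂ ∈ Y := by
        apply KEY
        intro z hz
        rcases hS2 z hz with rfl | rfl
        · simp [he₁x, he₂x']
        · simp [he₁t', he₂t]
      rw [hmem, map_sub, map_sub, map_smul, map_smul, smul_eq_mul, smul_eq_mul] at this
      rw [← ha, ← hb] at this
      linarith
    have hane : a ≠ 0 := by
      intro h0
      obtain ⟨f, hfsupp, hfY⟩ := hxS ({t}ᶜ)
        (isClosed_singleton.isOpen_compl.mem_nhds (by simpa using hxt))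
      have hft : f t = 0 := hfsupp t (by simp)
      exact hfY ((hmem f).2 (by rw [hrep f, h0, hft]; ring))
    have hbne : b ≠ 0 := by
      intro h0
      obtain ⟨f, hfsupp, hfY⟩ := htS ({x}ᶜ)
        (isClosed_singleton.isOpen_compl.mem_nhds (by simpa using hxt.symm))
      have hfx : f x = 0 := hfsupp x (by simp)
      exact hfY ((hmem f).2 (by rw [hrep f, h0, hfx]; ring))
    rcases hane.lt_or_gt with haneg | hapos <;> rcases hbne.lt_or_gt with hbneg | hbpos
    · -- both negative : contradiction via -φ
      exact absurd (aux_sgn Y hlat (-φ) hmemneg x t e₁ e₂ he₁x he₁t' he₂x' he₂t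
        (-a) (-b) (by linarith) (by linarith)
        (fun f => by simp [hrep f]; ring)) (not_false)
    · -- a < 0 < b : conclusion with α = -b/a
      right
      refine ⟨x, t, -(b/a), hxt, ?_, ?_⟩
      · have : b / a < 0 := div_neg_of_pos_of_neg hbpos haneg
        linarith
      · ext f
        rw [SetLike.mem_coe, hmem, hrep f, Set.mem_setOf_eq]
        constructor
        · intro h
          field_simp
          linarith
        · intro h
          field_simp at h
          linarith
    · -- b < 0 < a : conclusion
      right
      refine ⟨x, t, -(b/a), hxt, ?_, ?_⟩
      · have : b / a < 0 := div_neg_of_neg_of_pos hbneg hapos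
        linarith
      · ext f
        rw [SetLike.mem_coe, hmem, hrep f, Set.mem_setOf_eq]
        constructor
        · intro h
          field_simp
          linarith
        · intro h
          field_simp at h
          linarith
    · -- both positive : contradiction
      exact absurd (aux_sgn Y hlat φ hmem x t e₁ e₂ he₁x he₁t' he₂x' he₂t
        a b hapos hbpos hrep) (not_false)
end

section
/- Every closed ideal in C(Ω) is of the form J_F = {f ∈ C(Ω) : f vanishes on F} for some closed subset F of Ω; more generally, for any ideal J of C(Ω), its closure equals J_F where F is the common zero set of all functions in J. -/
/-- For an order ideal `J` of `C(Ω)`, the common zero set `F` of `J` is closed and the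
closure of `J` equals `J_F = {f : f\_{|F} = 0}`; in particular every closed ideal is of
this form. -/
theorem stmt4 {Ω : Type*} [TopologicalSpace Ω] [T2Space Ω] [CompletelyRegularSpace Ω]
    (J : Submodule ℝ C(Ω, ℝ))
    (hideal : ∀ f g : C(Ω, ℝ), |f| ≤ |g| → g ∈ J → f ∈ J) :
    IsClosed {t : Ω | ∀ g ∈ J, g t = 0} ∧
      closure (J : Set C(Ω, ℝ)) =
        {f : C(Ω, ℝ) | ∀ t ∈ {t : Ω | ∀ g ∈ J, g t = 0}, f t = 0} := by
  set F : Set Ω := {t : Ω | ∀ g ∈ J, g t = 0} with hFdef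
  have hFclosed : IsClosed F := by
    have : F = ⋂ g ∈ (J : Set C(Ω, ℝ)), (g ⁻¹' {0}) := by
      ext t; simp [hFdef]
    rw [this]
    exact isClosed_biInter fun g _ => isClosed_singleton.preimage g.continuous
  refine ⟨hFclosed, Set.Subset.antisymm ?_ ?_⟩
  · have hclosed : IsClosed {f : C(Ω, ℝ) | ∀ t ∈ F, f t = 0} := by
      have : {f : C(Ω, ℝ) | ∀ t ∈ F, f t = 0}
          = ⋂ t ∈ F, (fun f : C(Ω, ℝ) => f t) ⁻¹' {0} := by
        ext f; simp
      rw [this]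
      exact isClosed_biInter fun t _ =>
        isClosed_singleton.preimage (continuous_eval_const t)
    exact closure_minimal (fun g hg t ht => ht g hg) hclosed
  · intro f hf
    have hb := (Metric.uniformity_basis_dist (α := ℝ)).compactConvergenceUniformity (α := Ω)
    rw [mem_closure_iff_nhds_basis (nhds_basis_uniformity' hb)]
    rintro ⟨K, ε⟩ ⟨hK, hε⟩
    simp only [Set.mem_setOf_eq]
    -- the set where |f| is large
    set A : Set Ω := {x ∈ K | ε ≤ |f x|} with hAdef
    have hAK : A ⊆ K := fun x hx => hx.1
    have hAcomp : IsCompact A := by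
      have : A = K ∩ (fun x => |f x|) ⁻¹' (Set.Ici ε) := by
        ext x; simp [hAdef, Set.mem_setOf_eq]
      rw [this]
      exact hK.inter_right (isClosed_Ici.preimage (f.continuous.abs))
    rcases Set.eq_empty_or_nonempty A with hA | hA
    · refine ⟨0, J.zero_mem, fun x hx => ?_⟩
      have : ¬ ε ≤ |f x| := fun h => (hA ▸ (⟨hx, h⟩ : x ∈ A) : x ∈ (∅ : Set Ω))
      simpa [Real.dist_eq] using lt_of_not_ge this
    · -- choose functions in J not vanishing at points of A
      have hchoice : ∀ t ∈ A, ∃ g : C(Ω, ℝ), g ∈ J ∧ g t ≠ 0 := by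
        intro t ht
        by_contra hcon
        push_neg at hcon
        have htF : t ∈ F := fun g hg => hcon g hg
        have h0 : ε ≤ (0:ℝ) := by simpa [hf t htF] using ht.2
        linarith
      choose! g hgJ hgne using hchoice
      -- open cover of A
      have hcover : A ⊆ ⋃ t ∈ A, (fun s => |g t s|) ⁻¹' (Set.Ioi (|g t t| / 2)) := by
        intro t ht
        refine Set.mem_biUnion ht ?_
        have := abs_pos.mpr (hgne t ht)
        simp only [Set.mem_preimage, Set.mem_Ioi]
        linarith
      obtain ⟨b, hbA, hbfin, hbcov⟩ := hAcomp.elim_finite_subcover_image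
        (fun t _ => isOpen_Ioi.preimage ((g t).continuous.abs)) hcover
      have hbne : hbfin.toFinset.Nonempty := by
        obtain ⟨t, ht⟩ := hA
        obtain ⟨u, hu, _⟩ := Set.mem_iUnion₂.mp (hbcov ht)
        exact ⟨u, hbfin.mem_toFinset.mpr hu⟩
      set h : C(Ω, ℝ) := ∑ t ∈ hbfin.toFinset, |g t| with hhdef
      have hhJ : h ∈ J := by
        refine Submodule.sum_mem J fun t ht => ?_
        exact hideal _ (g t) (by rw [abs_abs]) (hgJ t (hbA (hbfin.mem_toFinset.mp ht)))
      have hhnonneg : ∀ x, 0 ≤ h x := by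
        intro x
        simp only [hhdef, ContinuousMap.coe_sum, Finset.sum_apply]
        exact Finset.sum_nonneg fun t _ => abs_nonneg _
      set δ : ℝ := hbfin.toFinset.inf' hbne (fun t => |g t t| / 2) with hδdef
      have hδpos : 0 < δ := by
        rw [hδdef, Finset.lt_inf'_iff]
        intro t ht
        have := abs_pos.mpr (hgne t (hbA (hbfin.mem_toFinset.mp ht)))
        linarith
      have hhA : ∀ x ∈ A, δ ≤ h x := by
        intro x hx
        obtain ⟨u, hu, hux⟩ := Set.mem_iUnion₂.mp (hbcov hx)
        simp only [Set.mem_preimage, Set.mem_Ioi] at hux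
        have h1 : |g u x| ≤ h x := by
          simp only [hhdef, ContinuousMap.coe_sum, Finset.sum_apply]
          exact Finset.single_le_sum (f := fun t => |g t| x)
            (fun t _ => abs_nonneg _) (hbfin.mem_toFinset.mpr hu)
        have h2 : δ ≤ |g u u| / 2 :=
          Finset.inf'_le _ (hbfin.mem_toFinset.mpr hu)
        linarith
      -- bound of f on K
      obtain ⟨C, hC⟩ := hK.exists_bound_of_continuousOn f.continuous.continuousOn
      set M : ℝ := max C 0 with hMdef
      have hM0 : 0 ≤ M := le_max_right _ _
      have hfK : ∀ x ∈ K, |f x| ≤ M := fun x hx =>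
        le_trans (by simpa [Real.norm_eq_abs] using hC x hx) (le_max_left _ _)
      -- truncation of f and cut-off
      set fM : C(Ω, ℝ) := (f ⊓ ContinuousMap.const Ω M) ⊔ ContinuousMap.const Ω (-M) with hfMdef
      have hfMabs : ∀ x, |fM x| ≤ M := by
        intro x
        rw [abs_le]
        constructor
        · simp [hfMdef]
        · simp only [hfMdef, ContinuousMap.sup_apply, ContinuousMap.inf_apply,
            ContinuousMap.const_apply, sup_le_iff, inf_le_iff]
          exact ⟨Or.inr le_rfl, by linarith⟩
      have hfMK : ∀ x ∈ K, fM x = f x := by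
        intro x hx
        have := hfK x hx
        rw [abs_le] at this
        simp only [hfMdef, ContinuousMap.sup_apply, ContinuousMap.inf_apply,
          ContinuousMap.const_apply]
        rw [inf_eq_left.mpr this.2, sup_eq_left.mpr this.1]
      set u : C(Ω, ℝ) := (1 : C(Ω, ℝ)) ⊓ (δ⁻¹ • h) with hudef
      have hu01 : ∀ x, 0 ≤ u x ∧ u x ≤ 1 := by
        intro x
        constructor
        · simp only [hudef, ContinuousMap.inf_apply, ContinuousMap.smul_apply,
            ContinuousMap.one_apply, le_inf_iff, smul_eq_mul]
          exact ⟨zero_le_one, mul_nonneg (by positivity) (hhnonneg x)⟩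
        · simp [hudef]
      have huA : ∀ x ∈ A, u x = 1 := by
        intro x hx
        have h1 : (1 : ℝ) ≤ δ⁻¹ * h x := by
          rw [inv_mul_eq_div, le_div_iff₀ hδpos, one_mul]
          exact hhA x hx
        simp only [hudef, ContinuousMap.inf_apply, ContinuousMap.smul_apply,
          ContinuousMap.one_apply, smul_eq_mul]
        exact inf_eq_left.mpr h1
      refine ⟨fM * u, ?_, ?_⟩
      · -- membership in J via domination by (M/δ) • h
        refine hideal (fM * u) ((M / δ) • h) ?_ (J.smul_mem _ hhJ)
        rw [ContinuousMap.le_def]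
        intro x
        simp only [ContinuousMap.abs_apply, ContinuousMap.mul_apply,
          ContinuousMap.smul_apply, smul_eq_mul, abs_mul]
        have h1 : |fM x| * |u x| ≤ M * (δ⁻¹ * h x) := by
          rw [abs_of_nonneg (hu01 x).1]
          refine mul_le_mul (hfMabs x) ?_ (hu01 x).1 hM0
          simp [hudef]
        have h2 : M * (δ⁻¹ * h x) ≤ |M / δ| * |h x| := by
          rw [abs_of_nonneg (div_nonneg hM0 hδpos.le), abs_of_nonneg (hhnonneg x),
            div_eq_mul_inv, mul_assoc]
        linarith
      · -- the approximation estimate on K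
        intro x hx
        rw [Real.dist_eq]
        have hfMx := hfMK x hx
        simp only [ContinuousMap.mul_apply, hfMx]
        have : f x - f x * u x = f x * (1 - u x) := by ring
        rw [this, abs_mul]
        by_cases hxA : x ∈ A
        · rw [huA x hxA]
          simpa using hε
        · have hflt : |f x| < ε := by
            by_contra hcon
            exact hxA ⟨hx, le_of_not_gt hcon⟩
          have h1 : |1 - u x| ≤ 1 := by
            rw [abs_le]
            constructor <;> [linarith [(hu01 x).2]; linarith [(hu01 x).1]]
          calc |f x| * |1 - u x| ≤ |f x| * 1 :=
                mul_le_mul_of_nonneg_left h1 (abs_nonneg _)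
            _ < ε := by simpa using hflt
end

section
/- Every closed sublattice of codimension n in C(Ω) contains a closed ideal of C(Ω) of codimension at most 2n. -/
/-!
By Kakutani's lattice Stone–Weierstrass theorem, a closed sublattice `Y` contains every `f`
that agrees with some member of `Y` at each pair of points; by duality in the plane this
holds as soon as `f` is killed by every functional annihilating `Y` that depends only on
the values at two points. These functionals lie in the `n`-dimensional annihilator of `Y`,
so at most `n` of them span all the others. The functions vanishing at the at most `2n`
points they involve form a closed ideal of codimension at most `2n`, and it lies in `Y`.
-/

open Module Submodule LinearMap

theorem Subspace.exists_finset_subset_card_le_span_eq_of_subset_dualAnnihilator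
    {K V : Type*} [Field K] [AddCommGroup V] [Module K V] (W : Subspace K V)
    [FiniteDimensional K (V ⧸ W)] {P : Set (Dual K V)} (hP : P ⊆ W.dualAnnihilator) :
    ∃ B : Finset (Dual K V), ↑B ⊆ P ∧ B.card ≤ finrank K (V ⧸ W) ∧ span K ↑B = span K P := by
  have hW : finrank K W.dualAnnihilator = finrank K (V ⧸ W) :=
    W.dualQuotEquivDualAnnihilator.finrank_eq.symm.trans Subspace.dual_finrank_eq
  have : FiniteDimensional K W.dualAnnihilator :=
    Module.Finite.equiv W.dualQuotEquivDualAnnihilator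
  have hle : span K P ≤ W.dualAnnihilator := span_le.2 hP
  have := Submodule.finiteDimensional_of_le hle
  obtain ⟨B, hBP, hBcard, hBspan, -⟩ := exists_finset_span_eq_linearIndepOn K P
  exact ⟨B, hBP, hBcard ▸ (Submodule.finrank_mono hle).trans_eq hW, hBspan⟩

namespace ContinuousMap

variable {Ω : Type*} [TopologicalSpace Ω]

theorem inf_mem_of_sup_mem (Y : Submodule ℝ C(Ω, ℝ)) (hsup : ∀ f ∈ Y, ∀ g ∈ Y, f ⊔ g ∈ Y)
    {f g : C(Ω, ℝ)} (hf : f ∈ Y) (hg : g ∈ Y) : f ⊓ g ∈ Y := by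
  have : f ⊓ g = -((-f) ⊔ (-g)) := by ext; simp [max_neg_neg]
  rw [this]
  exact Y.neg_mem (hsup _ (Y.neg_mem hf) _ (Y.neg_mem hg))

theorem mem_closure_of_forall_isCompact {S : Set C(Ω, ℝ)} {f : C(Ω, ℝ)}
    (h : ∀ K, IsCompact K → ∀ ε > 0, ∃ g ∈ S, ∀ z ∈ K, dist (f z) (g z) < ε) :
    f ∈ closure S := by
  rw [mem_closure_iff_nhds_basis
    (nhds_basis_uniformity' ContinuousMap.hasBasis_compactConvergenceUniformity)]
  rintro ⟨K, V⟩ ⟨hK, hV⟩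
  obtain ⟨ε, hε, hεV⟩ := Metric.mem_uniformity_dist.mp hV
  obtain ⟨g, hg, hgf⟩ := h K hK ε hε
  exact ⟨g, hg, fun z hz => hεV (hgf z hz)⟩

theorem exists_mem_lt_on_isCompact {L : Set C(Ω, ℝ)} (hL : ∀ g ∈ L, ∀ h ∈ L, g ⊓ h ∈ L)
    {K : Set Ω} (hK : IsCompact K) (hKne : K.Nonempty) {u : Ω → ℝ} (hu : Continuous u)
    {g : Ω → C(Ω, ℝ)} (hgL : ∀ y, g y ∈ L) (hgu : ∀ y ∈ K, g y y < u y)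
    {A : Set Ω} {v : Ω → ℝ} (hgv : ∀ y, ∀ z ∈ A, v z < g y z) :
    ∃ h ∈ L, (∀ z ∈ K, h z < u z) ∧ ∀ z ∈ A, v z < h z := by
  obtain ⟨t, -, hcover⟩ := hK.elim_nhds_subcover (fun y => {z | g y z < u z})
    fun y hy => (isOpen_lt (g y).continuous hu).mem_nhds (hgu y hy)
  have ht : t.Nonempty := by
    obtain ⟨z, hz⟩ := hKne
    obtain ⟨y, hy, -⟩ := Set.mem_iUnion₂.mp (hcover hz)
    exact ⟨y, hy⟩
  refine ⟨t.inf' ht g, Finset.inf'_mem L hL t ht g fun y _ => hgL y, fun z hz => ?_,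
    fun z hz => ?_⟩
  · obtain ⟨y, hy, hyz⟩ := Set.mem_iUnion₂.mp (hcover hz)
    rw [inf'_apply]
    exact (Finset.inf'_le _ hy).trans_lt hyz
  · rw [inf'_apply, Finset.lt_inf'_iff]
    exact fun y _ => hgv y z hz

/-- Kakutani's lattice version of the Stone–Weierstrass theorem, for the compact-open
topology. -/
theorem mem_of_forall_exists_eq_eq (Y : Submodule ℝ C(Ω, ℝ))
    (hlat : ∀ f ∈ Y, ∀ g ∈ Y, f ⊔ g ∈ Y) (hclosed : IsClosed (Y : Set C(Ω, ℝ)))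
    {f : C(Ω, ℝ)} (hf : ∀ x y : Ω, ∃ g ∈ Y, g x = f x ∧ g y = f y) : f ∈ Y := by
  rw [← SetLike.mem_coe, ← hclosed.closure_eq]
  refine mem_closure_of_forall_isCompact fun K hK ε hε => ?_
  rcases K.eq_empty_or_nonempty with rfl | hKne
  · exact ⟨0, Y.zero_mem, by simp⟩
  have hinf : ∀ g ∈ Y, ∀ h ∈ Y, g ⊓ h ∈ Y := fun g hg h hh => inf_mem_of_sup_mem Y hlat hg hh
  choose g hgY hgx hgy using hf
  have happrox : ∀ x, ∃ h ∈ Y, (∀ z ∈ K, h z < f z + ε) ∧ f x - ε < h x := by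
    intro x
    obtain ⟨h, hY, hu, hv⟩ := exists_mem_lt_on_isCompact (A := {x}) (u := fun z => f z + ε)
      (v := fun z => f z - ε) hinf hK hKne (by fun_prop) (hgY x) (fun y _ => by simp [hgy, hε])
      (fun y z hz => by simp [Set.mem_singleton_iff.mp hz, hgx, hε])
    exact ⟨h, hY, hu, hv x rfl⟩
  choose h hY hhu hhv using happrox
  obtain ⟨k, hkY, hku, hkv⟩ := exists_mem_lt_on_isCompact (A := K)
    (v := fun z => -(f z + ε)) hinf hK hKne (u := fun z => ε - f z) (by fun_prop)
    (fun x => Y.neg_mem (hY x)) (fun y _ => by simp; linarith [hhv y])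
    (fun y z hz => by simp; linarith [hhu y z hz])
  refine ⟨-k, Y.neg_mem hkY, fun z hz => ?_⟩
  rw [neg_apply, Real.dist_eq, abs_sub_lt_iff]
  constructor <;> linarith [hku z hz, hkv z hz]

def restrictₗ (S : Set Ω) : C(Ω, ℝ) →ₗ[ℝ] S → ℝ :=
  funLeft ℝ ℝ ((↑) : S → Ω) ∘ₗ coeFnLinearMap ℝ

theorem mem_ker_restrictₗ {S : Set Ω} {f : C(Ω, ℝ)} :
    f ∈ ker (restrictₗ S) ↔ ∀ x ∈ S, f x = 0 := by
  rw [mem_ker, funext_iff, Subtype.forall]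
  rfl

theorem ker_restrictₗ_anti {S T : Set Ω} (hST : S ⊆ T) :
    ker (restrictₗ T) ≤ ker (restrictₗ S) := fun _ hf =>
  mem_ker_restrictₗ.2 fun x hx => mem_ker_restrictₗ.1 hf x (hST hx)

theorem isClosed_ker_restrictₗ (S : Set Ω) : IsClosed (ker (restrictₗ S) : Set C(Ω, ℝ)) := by
  have : (ker (restrictₗ S) : Set C(Ω, ℝ)) = ⋂ x ∈ S, {f | f x = 0} := by
    ext f
    simp only [SetLike.mem_coe, mem_ker_restrictₗ, Set.mem_iInter, Set.mem_ofPred_eq]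
  rw [this]
  exact isClosed_biInter fun x _ => isClosed_eq (continuous_eval_const x) continuous_const

theorem mem_ker_restrictₗ_of_abs_le {S : Set Ω} {f g : C(Ω, ℝ)} (hfg : |f| ≤ |g|)
    (hg : g ∈ ker (restrictₗ S)) : f ∈ ker (restrictₗ S) := by
  refine mem_ker_restrictₗ.2 fun x hx => abs_nonpos_iff.1 ?_
  simpa [mem_ker_restrictₗ.1 hg x hx] using hfg x

instance (S : Set Ω) [Finite S] : FiniteDimensional ℝ (C(Ω, ℝ) ⧸ ker (restrictₗ S)) :=
  Module.Finite.equiv (restrictₗ S).quotKerEquivRange.symm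

theorem finrank_quotient_ker_restrictₗ_le (S : Finset Ω) :
    finrank ℝ (C(Ω, ℝ) ⧸ ker (restrictₗ (S : Set Ω))) ≤ S.card := by
  rw [(restrictₗ (S : Set Ω)).quotKerEquivRange.finrank_eq]
  exact (Submodule.finrank_le _).trans_eq (by simp)

def twoPointAnnihilator (Y : Submodule ℝ C(Ω, ℝ)) : Set (Dual ℝ C(Ω, ℝ)) :=
  {φ | φ ∈ Y.dualAnnihilator ∧ ∃ T : Finset Ω, T.card ≤ 2 ∧ ker (restrictₗ (T : Set Ω)) ≤ ker φ}

theorem mem_of_forall_twoPointAnnihilator (Y : Submodule ℝ C(Ω, ℝ))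
    (hlat : ∀ f ∈ Y, ∀ g ∈ Y, f ⊔ g ∈ Y) (hclosed : IsClosed (Y : Set C(Ω, ℝ)))
    {f : C(Ω, ℝ)} (hf : ∀ φ ∈ twoPointAnnihilator Y, φ f = 0) : f ∈ Y := by
  classical
  refine mem_of_forall_exists_eq_eq Y hlat hclosed fun x y => ?_
  set R := restrictₗ (({x, y} : Finset Ω) : Set Ω)
  have hRf : R f ∈ Y.map R := by
    refine (Subspace.forall_mem_dualAnnihilator_apply_eq_zero_iff _ _).1 fun ψ hψ => ?_
    refine hf (ψ ∘ₗ R) ⟨(mem_dualAnnihilator _).2 fun g hg => ?_, _, Finset.card_le_two,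
      ker_le_ker_comp R ψ⟩
    exact (mem_dualAnnihilator _).1 hψ _ (mem_map_of_mem hg)
  obtain ⟨g, hg, hgf⟩ := mem_map.1 hRf
  exact ⟨g, hg, congrFun hgf ⟨x, by simp⟩, congrFun hgf ⟨y, by simp⟩⟩

theorem ker_restrictₗ_biUnion_le [DecidableEq Ω] (Y : Submodule ℝ C(Ω, ℝ))
    (hlat : ∀ f ∈ Y, ∀ g ∈ Y, f ⊔ g ∈ Y) (hclosed : IsClosed (Y : Set C(Ω, ℝ)))
    {B : Finset (Dual ℝ C(Ω, ℝ))} (hB : span ℝ ↑B = span ℝ (twoPointAnnihilator Y))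
    {T : Dual ℝ C(Ω, ℝ) → Finset Ω} (hT : ∀ φ ∈ B, ker (restrictₗ (T φ : Set Ω)) ≤ ker φ) :
    ker (restrictₗ (B.biUnion T : Set Ω)) ≤ Y := by
  intro f hf
  have hBf : span ℝ ↑B ≤ ker (Dual.eval ℝ C(Ω, ℝ) f) := span_le.2 fun φ hφ =>
    hT φ hφ (ker_restrictₗ_anti (Finset.coe_subset.2 (Finset.subset_biUnion_of_mem T hφ)) hf)
  exact mem_of_forall_twoPointAnnihilator Y hlat hclosed fun φ hφ =>
    hBf (hB ▸ subset_span hφ)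

end ContinuousMap

open ContinuousMap in
theorem stmt5_general {Ω : Type*} [TopologicalSpace Ω]
    (Y : Submodule ℝ C(Ω, ℝ)) (hlat : ∀ f ∈ Y, ∀ g ∈ Y, f ⊔ g ∈ Y)
    (hclosed : IsClosed (Y : Set C(Ω, ℝ)))
    (n : ℕ) (hfin : FiniteDimensional ℝ (C(Ω, ℝ) ⧸ Y))
    (hn : Module.finrank ℝ (C(Ω, ℝ) ⧸ Y) = n) :
    ∃ J : Submodule ℝ C(Ω, ℝ), J ≤ Y ∧
      (∀ f g : C(Ω, ℝ), |f| ≤ |g| → g ∈ J → f ∈ J) ∧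
      IsClosed (J : Set C(Ω, ℝ)) ∧
      FiniteDimensional ℝ (C(Ω, ℝ) ⧸ J) ∧
      Module.finrank ℝ (C(Ω, ℝ) ⧸ J) ≤ 2 * n := by
  classical
  obtain ⟨B, hBP, hBcard, hBspan⟩ :=
    Subspace.exists_finset_subset_card_le_span_eq_of_subset_dualAnnihilator Y
      (P := twoPointAnnihilator Y) fun _ hφ => hφ.1
  choose! T hTcard hTker using fun φ (hφ : φ ∈ B) => (hBP hφ).2
  refine ⟨_, ker_restrictₗ_biUnion_le Y hlat hclosed hBspan hTker,
    fun f g => mem_ker_restrictₗ_of_abs_le, isClosed_ker_restrictₗ _, inferInstance, ?_⟩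
  calc finrank ℝ (C(Ω, ℝ) ⧸ ker (restrictₗ (B.biUnion T : Set Ω)))
      ≤ (B.biUnion T).card := finrank_quotient_ker_restrictₗ_le _
    _ ≤ B.card * 2 := Finset.card_biUnion_le_card_mul B T 2 hTcard
    _ ≤ 2 * n := by omega

/-- Every closed sublattice of `C(Ω)` of codimension `n` contains a closed order ideal of
codimension at most `2n`. -/
theorem stmt5 {Ω : Type*} [TopologicalSpace Ω] [T2Space Ω] [CompletelyRegularSpace Ω]
    (Y : Submodule ℝ C(Ω, ℝ)) (hlat : ∀ f ∈ Y, ∀ g ∈ Y, f ⊔ g ∈ Y)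
    (hclosed : IsClosed (Y : Set C(Ω, ℝ)))
    (n : ℕ) (hfin : FiniteDimensional ℝ (C(Ω, ℝ) ⧸ Y))
    (hn : Module.finrank ℝ (C(Ω, ℝ) ⧸ Y) = n) :
    ∃ J : Submodule ℝ C(Ω, ℝ), J ≤ Y ∧
      (∀ f g : C(Ω, ℝ), |f| ≤ |g| → g ∈ J → f ∈ J) ∧
      IsClosed (J : Set C(Ω, ℝ)) ∧
      FiniteDimensional ℝ (C(Ω, ℝ) ⧸ J) ∧
      Module.finrank ℝ (C(Ω, ℝ) ⧸ J) ≤ 2 * n :=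
  stmt5_general Y hlat hclosed n hfin hn
end

section
/- Let Y be a sublattice of C(Ω) and define ker Y as the set of points where all functions of Y vanish. For s, t in Ω \ ker Y, declare s ~ t if there exists α ≠ 0 with f(s) = α f(t) for all f ∈ Y. Then each equivalence class (clan) of ~ is closed in Ω \ ker Y. -/
/-- The clans of a sublattice `Y` of `C(Ω)` (equivalence classes of the relation
`s ~ t ↔ ∃ α ≠ 0, ∀ f ∈ Y, f s = α * f t` on `Ω \ ker Y`) are closed in `Ω \ ker Y`. -/
theorem stmt6 {Ω : Type*} [TopologicalSpace Ω] [T2Space Ω] [CompletelyRegularSpace Ω]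
    (Y : Submodule ℝ C(Ω, ℝ)) (hlat : ∀ f ∈ Y, ∀ g ∈ Y, f ⊔ g ∈ Y)
    (kerY : Set Ω) (hker : kerY = {t : Ω | ∀ f ∈ Y, f t = 0})
    (s : {t : Ω // t ∉ kerY}) :
    IsClosed {t : {t : Ω // t ∉ kerY} |
      ∃ α : ℝ, α ≠ 0 ∧ ∀ f ∈ Y, f (s : Ω) = α * f (t : Ω)} := by
  obtain ⟨g, hgY, hgs⟩ : ∃ g ∈ Y, (g : C(Ω, ℝ)) (s : Ω) ≠ 0 := by
    by_contra h
    push_neg at h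
    exact s.2 (hker ▸ h)
  have hset : {t : {t : Ω // t ∉ kerY} |
      ∃ α : ℝ, α ≠ 0 ∧ ∀ f ∈ Y, f (s : Ω) = α * f (t : Ω)} =
      ⋂ f ∈ Y, {t : {t : Ω // t ∉ kerY} |
        f (s : Ω) * g (t : Ω) = g (s : Ω) * f (t : Ω)} := by
    ext t
    simp only [Set.mem_setOf_eq, Set.mem_iInter]
    constructor
    · rintro ⟨α, hα, h⟩ f hf
      rw [h f hf, h g hgY]; ring
    · intro h
      have hgt : g (t : Ω) ≠ 0 := by
        intro h0
        apply t.2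
        simp only [hker, Set.mem_setOf_eq]
        intro f hf
        have h1 := h f hf
        rw [h0, mul_zero] at h1
        exact (mul_eq_zero.mp h1.symm).resolve_left hgs
      refine ⟨g (s : Ω) / g (t : Ω), div_ne_zero hgs hgt, fun f hf => ?_⟩
      rw [div_mul_eq_mul_div, ← h f hf, mul_div_assoc, div_self hgt, mul_one]
  rw [hset]
  refine isClosed_biInter fun f hf => isClosed_eq ?_ ?_
  · exact continuous_const.mul (g.continuous.comp continuous_subtype_val)
  · exact continuous_const.mul (f.continuous.comp continuous_subtype_val)
end

section
/- Every Banach sequence space is order continuous: if a net decreases to 0 in order, then it converges to 0 in norm. -/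
/-!
Let `Pₙ` be the `n`-th basis projection. Each coordinate of a net `x_α ↓ 0` decreases to `0`
(a positive lower bound `b` of the `i`-th coordinates would make `b • eᵢ` a lower bound of the
net), so `Pₙ x_α → 0` for every fixed `n`. The tails `x_α - Pₙ x_α` are positive and decrease with
`α`, so by solidity of the norm they stay below `‖x_{α₀} - Pₙ x_{α₀}‖`, which is small for `n`
large since the basis expansion of `x_{α₀}` converges.
-/

open Filter Finset Topology

namespace BanachSequenceSpace

variable {X : Type*} [AddCommGroup X] [TopologicalSpace X] [Module ℝ X]
  (c : ℕ → X →L[ℝ] ℝ) (e : ℕ → X)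

def partialSum (n : ℕ) (y : X) : X :=
  ∑ i ∈ range n, c i y • e i

variable {c e}

lemma coord_smul_basis (huniq : ∀ i j, c i (e j) = if i = j then 1 else 0)
    (i j : ℕ) (b : ℝ) : c j (b • e i) = if j = i then b else 0 := by
  rw [map_smul, huniq, smul_eq_mul, mul_ite, mul_one, mul_zero]

lemma coord_partialSum (huniq : ∀ i j, c i (e j) = if i = j then 1 else 0)
    (j n : ℕ) (y : X) : c j (partialSum c e n y) = if j < n then c j y else 0 := by
  simp only [partialSum, map_sum, coord_smul_basis huniq, sum_ite_eq, mem_range]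

lemma coord_sub_partialSum (huniq : ∀ i j, c i (e j) = if i = j then 1 else 0)
    (j n : ℕ) (y : X) : c j (y - partialSum c e n y) = if j < n then 0 else c j y := by
  rw [map_sub, coord_partialSum huniq]
  split_ifs <;> simp

section Order

variable [PartialOrder X] [IsOrderedAddMonoid X]

lemma le_iff_coord_le (horder : ∀ x : X, 0 ≤ x ↔ ∀ i, 0 ≤ c i x) {a b : X} :
    a ≤ b ↔ ∀ i, c i a ≤ c i b := by
  simp only [← sub_nonneg (b := a), horder, map_sub, sub_nonneg]

lemma isGLB_range_coord (huniq : ∀ i j, c i (e j) = if i = j then 1 else 0)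
    (horder : ∀ x : X, 0 ≤ x ↔ ∀ i, 0 ≤ c i x) {ι : Type*} {x : ι → X}
    (hinf : IsGLB (Set.range x) 0) (i : ℕ) : IsGLB (Set.range fun α => c i (x α)) 0 := by
  have hcoord_nonneg : ∀ j α, 0 ≤ c j (x α) := fun j α => (horder _).1 (hinf.1 ⟨α, rfl⟩) j
  refine ⟨?_, fun b hb => ?_⟩
  · rintro _ ⟨α, rfl⟩
    exact hcoord_nonneg i α
  by_contra! hb_pos
  have hbe_lower : b • e i ∈ lowerBounds (Set.range x) := by
    rintro _ ⟨α, rfl⟩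
    rw [le_iff_coord_le horder]
    intro j
    rw [coord_smul_basis huniq]
    split_ifs with hji
    · exact hji ▸ hb ⟨α, rfl⟩
    · exact hcoord_nonneg j α
  have hbe_nonpos := (le_iff_coord_le horder).1 (hinf.2 hbe_lower) i
  rw [coord_smul_basis huniq, if_pos rfl, map_zero] at hbe_nonpos
  exact hbe_nonpos.not_gt hb_pos

end Order

lemma norm_sub_partialSum_le {X : Type*} [NormedAddCommGroup X] [NormedSpace ℝ X] [Lattice X]
    [IsOrderedAddMonoid X] [HasSolidNorm X] {c : ℕ → X →L[ℝ] ℝ} {e : ℕ → X}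
    (huniq : ∀ i j, c i (e j) = if i = j then 1 else 0)
    (horder : ∀ x : X, 0 ≤ x ↔ ∀ i, 0 ≤ c i x) {y z : X} (hy : 0 ≤ y) (hyz : y ≤ z) (n : ℕ) :
    ‖y - partialSum c e n y‖ ≤ ‖z - partialSum c e n z‖ := by
  have htail_mono : ∀ {a b : X}, a ≤ b → a - partialSum c e n a ≤ b - partialSum c e n b := by
    intro a b hab
    rw [le_iff_coord_le horder] at hab ⊢
    intro j
    simp only [coord_sub_partialSum huniq]
    split_ifs
    exacts [le_rfl, hab j]
  have htail_nonneg : 0 ≤ y - partialSum c e n y := by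
    simpa [partialSum] using htail_mono hy
  apply HasSolidNorm.solid
  rw [abs_of_nonneg htail_nonneg, abs_of_nonneg (htail_nonneg.trans (htail_mono hyz))]
  exact htail_mono hyz

lemma tendsto_partialSum_zero [ContinuousAdd X] [ContinuousSMul ℝ X] {ι : Type*} [Preorder ι]
    {x : ι → X} (hcoord : ∀ i, Tendsto (fun α => c i (x α)) atTop (𝓝 0)) (n : ℕ) :
    Tendsto (fun α => partialSum c e n (x α)) atTop (𝓝 0) := by
  simpa [partialSum] using tendsto_finsetSum (range n) fun i _ => (hcoord i).smul_const (e i)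

end BanachSequenceSpace

open BanachSequenceSpace

theorem stmt7_general {X : Type*} [NormedAddCommGroup X] [Lattice X] [HasSolidNorm X] [IsOrderedAddMonoid X] [NormedSpace ℝ X]
    (c : ℕ → (X →L[ℝ] ℝ)) (e : ℕ → X)
    (hbasis : ∀ x : X, Filter.Tendsto
      (fun n => ∑ i ∈ Finset.range n, c i x • e i) Filter.atTop (nhds x))
    (huniq : ∀ i j, c i (e j) = if i = j then 1 else 0)
    (horder : ∀ x : X, 0 ≤ x ↔ ∀ i, 0 ≤ c i x)
    {ι : Type*} [Nonempty ι] [Preorder ι]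
    (x : ι → X) (hanti : Antitone x) (hinf : IsGLB (Set.range x) 0) :
    Filter.Tendsto (fun α => ‖x α‖) Filter.atTop (nhds 0) := by
  have hcoord (i : ℕ) : Tendsto (fun α => c i (x α)) atTop (𝓝 0) :=
    tendsto_atTop_isGLB (fun _ _ h => (le_iff_coord_le horder).1 (hanti h) i)
      (isGLB_range_coord huniq horder hinf i)
  obtain ⟨α₀⟩ := ‹Nonempty ι›
  suffices Tendsto x atTop (𝓝 0) by simpa using this.norm
  refine NormedAddGroup.tendsto_nhds_zero.2 fun ε hε => ?_
  obtain ⟨n, hn⟩ : ∃ n, ‖x α₀ - partialSum c e n (x α₀)‖ < ε / 2 :=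
    ((tendsto_iff_norm_sub_tendsto_zero.1 (hbasis (x α₀))).eventually
      (gt_mem_nhds (half_pos hε))).exists.imp fun _ h => by rwa [norm_sub_rev]
  filter_upwards [NormedAddGroup.tendsto_nhds_zero.1
      (tendsto_partialSum_zero (e := e) hcoord n) _ (half_pos hε),
    eventually_ge_atTop α₀] with α hPα hα
  calc ‖x α‖ ≤ ‖partialSum c e n (x α)‖ + ‖x α - partialSum c e n (x α)‖ :=
        norm_le_norm_add_norm_sub' _ _
    _ ≤ ‖partialSum c e n (x α)‖ + ‖x α₀ - partialSum c e n (x α₀)‖ := by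
        gcongr
        exact norm_sub_partialSum_le huniq horder (hinf.1 ⟨α, rfl⟩) (hanti hα) n
    _ < ε / 2 + ε / 2 := add_lt_add hPα hn
    _ = ε := add_halves ε

/-- Every Banach sequence space (a Banach lattice whose order is given by a Schauder basis,
with coordinate functionals `c` and basis vectors `e`) is order continuous: every net
decreasing to `0` in order converges to `0` in norm. -/
theorem stmt7 {X : Type*} [NormedAddCommGroup X] [Lattice X] [HasSolidNorm X] [IsOrderedAddMonoid X] [NormedSpace ℝ X] [CompleteSpace X]
    (c : ℕ → (X →L[ℝ] ℝ)) (e : ℕ → X)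
    (hbasis : ∀ x : X, Filter.Tendsto
      (fun n => ∑ i ∈ Finset.range n, c i x • e i) Filter.atTop (nhds x))
    (huniq : ∀ i j, c i (e j) = if i = j then 1 else 0)
    (horder : ∀ x : X, 0 ≤ x ↔ ∀ i, 0 ≤ c i x)
    {ι : Type*} [Nonempty ι] [Preorder ι] [IsDirected ι (· ≤ ·)]
    (x : ι → X) (hanti : Antitone x) (hinf : IsGLB (Set.range x) 0) :
    Filter.Tendsto (fun α => ‖x α‖) Filter.atTop (nhds 0) :=
  stmt7_general c e hbasis huniq horder x hanti hinf
end

section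
/- A linear subspace of R^n is a vector sublattice if and only if it is the linear span of a set of pairwise disjoint nonnegative vectors. -/
/-!
If `s` consists of pairwise disjoint nonnegative vectors, then on every coordinate at most one
vector of `s` is nonzero, so `∑ c v • v ⊔ ∑ d v • v = ∑ max (c v) (d v) • v` and the span is a
sublattice. Conversely, in a sublattice `Y` call a nonzero `a ≥ 0` of `Y` support-minimal if no
such vector has strictly smaller support. Every `y ∈ Y` supported in `supp a` is a multiple of `a`:
otherwise `y - t a`, for `t` chosen to kill one coordinate, has a nonzero positive or negative part
in `Y` of strictly smaller support. Hence two support-minimal vectors are proportional or have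
infimum `0`, and subtracting multiples of support-minimal vectors shrinks the support of any
`x ∈ Y` until nothing is left. Normalizing them gives the disjoint spanning family.
-/

open Function

lemma Pi.eq_zero_of_inf_eq_zero_of_pos {ι α : Type*} [LinearOrder α] [Zero α] {v w : ι → α}
    (hvw : v ⊓ w = 0) {i : ι} (hw : 0 < w i) : v i = 0 := by
  rcases min_eq_iff.mp (congrFun hvw i) with ⟨h, -⟩ | ⟨h, -⟩
  · exact h
  · exact absurd h hw.ne'

section Disjoint

variable {ι 𝕜 : Type*} [Semiring 𝕜] [LinearOrder 𝕜]

lemma exists_sum_smul_apply_eq {s : Set (ι → 𝕜)} (hs0 : ∀ v ∈ s, 0 ≤ v)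
    (hsd : s.Pairwise fun v w => v ⊓ w = 0) {T : Finset (ι → 𝕜)} (hT : ↑T ⊆ s) (i : ι) :
    ∃ v₀ : ι → 𝕜, ∃ r : 𝕜, 0 ≤ r ∧ ∀ c : (ι → 𝕜) → 𝕜, (∑ v ∈ T, c v • v) i = c v₀ * r := by
  by_cases h : ∃ v₀ ∈ T, v₀ i ≠ 0
  · obtain ⟨v₀, hv₀, hv₀i⟩ := h
    have hpos : 0 < v₀ i := (hs0 v₀ (hT hv₀) i).lt_of_ne' hv₀i
    refine ⟨v₀, v₀ i, hpos.le, fun c => ?_⟩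
    rw [Finset.sum_apply, Finset.sum_eq_single_of_mem v₀ hv₀ fun v hv hne => ?_, Pi.smul_apply,
      smul_eq_mul]
    rw [Pi.smul_apply, Pi.eq_zero_of_inf_eq_zero_of_pos (hsd (hT hv) (hT hv₀) hne) hpos, smul_zero]
  · push Not at h
    refine ⟨0, 0, le_rfl, fun c => ?_⟩
    simp +contextual [Finset.sum_apply, h]

lemma sum_smul_sup_sum_smul [IsOrderedRing 𝕜] {s : Set (ι → 𝕜)} (hs0 : ∀ v ∈ s, 0 ≤ v)
    (hsd : s.Pairwise fun v w => v ⊓ w = 0) {T : Finset (ι → 𝕜)} (hT : ↑T ⊆ s)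
    (c d : (ι → 𝕜) → 𝕜) :
    (∑ v ∈ T, c v • v) ⊔ (∑ v ∈ T, d v • v) = ∑ v ∈ T, max (c v) (d v) • v := by
  funext i
  obtain ⟨v₀, r, hr, hsum⟩ := exists_sum_smul_apply_eq hs0 hsd hT i
  rw [Pi.sup_apply, hsum, hsum, hsum, max_mul_of_nonneg _ _ hr]

lemma supClosed_span_of_pairwise_inf_eq_zero [IsOrderedRing 𝕜] {s : Set (ι → 𝕜)}
    (hs0 : ∀ v ∈ s, 0 ≤ v) (hsd : s.Pairwise fun v w => v ⊓ w = 0) :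
    SupClosed (Submodule.span 𝕜 s : Set (ι → 𝕜)) := by
  classical
  intro x hx y hy
  obtain ⟨Tx, hTx, hx⟩ := Submodule.mem_span_finite_of_mem_span hx
  obtain ⟨Ty, hTy, hy⟩ := Submodule.mem_span_finite_of_mem_span hy
  have hT : ↑(Tx ∪ Ty) ⊆ s := by simpa using Set.union_subset hTx hTy
  obtain ⟨c, -, rfl⟩ := Submodule.mem_span_finset.mp
    (Submodule.span_mono (by simp) hx : x ∈ Submodule.span 𝕜 ↑(Tx ∪ Ty))
  obtain ⟨d, -, rfl⟩ := Submodule.mem_span_finset.mp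
    (Submodule.span_mono (by simp) hy : y ∈ Submodule.span 𝕜 ↑(Tx ∪ Ty))
  rw [sum_smul_sup_sum_smul hs0 hsd hT]
  exact Submodule.sum_mem _ fun v hv => Submodule.smul_mem _ _ (Submodule.subset_span (hT hv))

end Disjoint

lemma support_sub_smul_subset {ι 𝕜 : Type*} [DivisionRing 𝕜] (x : ι → 𝕜) {a : ι → 𝕜} {i : ι}
    (hi : a i ≠ 0) :
    support (x - (x i / a i) • a) ⊆ (support x ∪ support a) \ {i} :=
  Set.subset_sdiff_singleton
    ((support_sub _ _).trans (Set.union_subset_union_right _ (support_const_smul_subset _ _)))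
    (by simp [hi])

section Sublattice

variable {ι 𝕜 : Type*} [Field 𝕜] [LinearOrder 𝕜] [IsStrictOrderedRing 𝕜] {Y : Submodule 𝕜 (ι → 𝕜)}

lemma inf_mem_of_supClosed (hY : SupClosed (Y : Set (ι → 𝕜))) {x y : ι → 𝕜} (hx : x ∈ Y)
    (hy : y ∈ Y) : x ⊓ y ∈ Y := by
  rw [← add_sub_cancel_right (x ⊓ y) (x ⊔ y), inf_add_sup]
  exact Y.sub_mem (Y.add_mem hx hy) (hY hx hy)

lemma exists_nonneg_support_subset (hY : SupClosed (Y : Set (ι → 𝕜))) {x : ι → 𝕜}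
    (hx : x ∈ Y) (hx0 : x ≠ 0) : ∃ p ∈ Y, 0 ≤ p ∧ p ≠ 0 ∧ support p ⊆ support x := by
  have support_sup_zero {y : ι → 𝕜} : support (y ⊔ 0) ⊆ support y := fun j hj hyj => by
    simp [hyj] at hj
  by_cases hpos : x⁺ = 0
  · refine ⟨x⁻, hY (Y.neg_mem hx) Y.zero_mem, negPart_nonneg x, fun hneg => ?_, ?_⟩
    · exact hx0 (by rw [← posPart_sub_negPart x, hpos, hneg, sub_zero])
    · simpa only [negPart_def, support_neg] using support_sup_zero (y := -x)
  · exact ⟨x⁺, hY hx Y.zero_mem, posPart_nonneg x, hpos, support_sup_zero⟩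

variable (Y) in
def IsSupportMinimal (a : ι → 𝕜) : Prop :=
  a ∈ Y ∧ 0 ≤ a ∧ a ≠ 0 ∧
    ∀ b ∈ Y, 0 ≤ b → b ≠ 0 → support b ⊆ support a → support a ⊆ support b

lemma exists_isSupportMinimal [Finite ι] (hY : SupClosed (Y : Set (ι → 𝕜))) {x : ι → 𝕜}
    (hx : x ∈ Y) (hx0 : x ≠ 0) : ∃ a, IsSupportMinimal Y a ∧ support a ⊆ support x := by
  obtain ⟨p, hpY, hp0, hpne, hpx⟩ := exists_nonneg_support_subset hY hx hx0
  obtain ⟨S, hSp, ⟨a, haY, ha0, hane, rfl⟩, hmin⟩ := exists_minimal_le_of_wellFoundedLT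
    (fun S : Set ι => ∃ b ∈ Y, 0 ≤ b ∧ b ≠ 0 ∧ support b = S) (support p)
    ⟨p, hpY, hp0, hpne, rfl⟩
  exact ⟨a, ⟨haY, ha0, hane, fun b hbY hb0 hbne hba => hmin ⟨b, hbY, hb0, hbne, rfl⟩ hba⟩,
    hSp.trans hpx⟩

lemma IsSupportMinimal.smul {a : ι → 𝕜} (ha : IsSupportMinimal Y a) {c : 𝕜} (hc : 0 < c) :
    IsSupportMinimal Y (c • a) := by
  obtain ⟨haY, ha0, hane, hmin⟩ := ha
  rw [IsSupportMinimal, support_const_smul_of_ne_zero c a hc.ne']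
  exact ⟨Y.smul_mem c haY, smul_nonneg hc.le ha0, smul_ne_zero hc.ne' hane, hmin⟩

lemma IsSupportMinimal.exists_eq_smul (hY : SupClosed (Y : Set (ι → 𝕜))) {a : ι → 𝕜}
    (ha : IsSupportMinimal Y a) {y : ι → 𝕜} (hy : y ∈ Y) (hya : support y ⊆ support a) :
    ∃ t : 𝕜, y = t • a := by
  obtain ⟨haY, -, hane, hmin⟩ := ha
  obtain ⟨i, hi⟩ : (support a).Nonempty := support_nonempty_iff.mpr hane
  refine ⟨y i / a i, sub_eq_zero.mp (by_contra fun hz => ?_)⟩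
  obtain ⟨p, hpY, hp0, hpne, hpz⟩ :=
    exists_nonneg_support_subset hY (Y.sub_mem hy (Y.smul_mem _ haY)) hz
  have hpa : support p ⊆ support a \ {i} :=
    hpz.trans ((support_sub_smul_subset y hi).trans (by rw [Set.union_eq_right.mpr hya]))
  exact (hpa (hmin p hpY hp0 hpne (hpa.trans Set.sdiff_subset) hi)).2 rfl

section Normalized

variable [Fintype ι]

variable (Y) in
/-- Normalizing the coordinate sum picks one vector on each ray of support-minimal vectors. -/
def normalizedSupportMinimal : Set (ι → 𝕜) :=
  {a | IsSupportMinimal Y a ∧ ∑ i, a i = 1}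

lemma pairwise_inf_eq_zero_normalizedSupportMinimal (hY : SupClosed (Y : Set (ι → 𝕜))) :
    (normalizedSupportMinimal Y).Pairwise fun v w => v ⊓ w = 0 := by
  intro a ⟨ha, ha1⟩ b ⟨hb, hb1⟩ hab
  have support_inf_subset {v : ι → 𝕜} (hv : 0 ≤ v) (hvab : a ⊓ b ≤ v) :
      support (a ⊓ b) ⊆ support v := fun j hj hvj =>
    hj (le_antisymm (hvj ▸ hvab j) (le_inf (ha.2.1 j) (hb.2.1 j)))
  have hinf := inf_mem_of_supClosed hY ha.1 hb.1
  obtain ⟨t, hta⟩ := ha.exists_eq_smul hY hinf (support_inf_subset ha.2.1 inf_le_left)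
  obtain ⟨u, hub⟩ := hb.exists_eq_smul hY hinf (support_inf_subset hb.2.1 inf_le_right)
  have htu : t = u := by
    simpa [ha1, hb1, ← Finset.mul_sum] using congrArg (fun v => ∑ i, v i) (hta.symm.trans hub)
  rcases eq_or_ne t 0 with rfl | ht
  · simpa using hta
  · exact absurd (smul_right_injective _ ht (hta.symm.trans (htu ▸ hub))) hab

lemma IsSupportMinimal.mem_span_normalizedSupportMinimal {a : ι → 𝕜}
    (ha : IsSupportMinimal Y a) :
    a ∈ Submodule.span 𝕜 (normalizedSupportMinimal Y) := by
  have hsum : 0 < ∑ i, a i := Fintype.sum_pos (ha.2.1.lt_of_ne' ha.2.2.1)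
  rw [← smul_inv_smul₀ hsum.ne' a]
  exact Submodule.smul_mem _ _ <| Submodule.subset_span
    ⟨ha.smul (inv_pos.mpr hsum), by simp [← Finset.mul_sum, hsum.ne']⟩

lemma le_span_normalizedSupportMinimal (hY : SupClosed (Y : Set (ι → 𝕜))) :
    Y ≤ Submodule.span 𝕜 (normalizedSupportMinimal Y) := by
  suffices ∀ S : Set ι, ∀ x ∈ Y, support x ⊆ S →
      x ∈ Submodule.span 𝕜 (normalizedSupportMinimal Y) from fun x hx => this _ x hx subset_rfl
  intro S
  induction S using WellFoundedLT.induction with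
  | ind S ih =>
  intro x hx hxS
  rcases eq_or_ne x 0 with rfl | hx0
  · exact zero_mem _
  obtain ⟨a, ha, hax⟩ := exists_isSupportMinimal hY hx hx0
  obtain ⟨i, hi⟩ := support_nonempty_iff.mpr ha.2.2.1
  have hrest := ih (S \ {i}) (Set.sdiff_singleton_ssubset.mpr (hxS (hax hi)))
    (x - (x i / a i) • a) (Y.sub_mem hx (Y.smul_mem _ ha.1))
    ((support_sub_smul_subset x hi).trans
      (Set.sdiff_subset_sdiff_left (Set.union_subset hxS (hax.trans hxS))))
  simpa using add_mem hrest (Submodule.smul_mem _ (x i / a i) ha.mem_span_normalizedSupportMinimal)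

end Normalized

end Sublattice

/-- A subspace of `ℝⁿ` is a sublattice iff it is the span of pairwise disjoint
nonnegative vectors. -/
theorem stmt9 {n : ℕ} (Y : Submodule ℝ (Fin n → ℝ)) :
    (∀ x ∈ Y, ∀ y ∈ Y, x ⊔ y ∈ Y) ↔
      ∃ s : Set (Fin n → ℝ), (∀ v ∈ s, 0 ≤ v) ∧
        (s.Pairwise fun v w => v ⊓ w = 0) ∧ Y = Submodule.span ℝ s := by
  constructor
  · intro hY
    exact ⟨normalizedSupportMinimal Y, fun a ha => ha.1.2.1,
      pairwise_inf_eq_zero_normalizedSupportMinimal hY,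
      le_antisymm (le_span_normalizedSupportMinimal hY)
        (Submodule.span_le.mpr fun a ha => ha.1.1)⟩
  · rintro ⟨s, hs0, hsd, rfl⟩
    exact supClosed_span_of_pairwise_inf_eq_zero hs0 hsd
end

section
/- A linear functional φ on an Archimedean vector lattice X is order bounded if and only if its kernel is uniformly closed. -/
/-- Relative uniform convergence closedness: `A` is uniformly closed if it contains the
limit of every sequence in `A` that converges relatively uniformly (with regulator `e`). -/
def RUClosed {X : Type*} [AddCommGroup X] [Lattice X] [Module ℝ X] (A : Set X) : Prop :=
  ∀ (x : X) (a : ℕ → X) (e : X), 0 ≤ e → (∀ n, a n ∈ A) →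
    (∀ ε : ℝ, 0 < ε → ∃ N, ∀ n ≥ N, |a n - x| ≤ ε • e) → x ∈ A

/-- A linear functional is order bounded if it is bounded on every order interval. -/
def OrderBoundedFunc {X : Type*} [AddCommGroup X] [Lattice X] [Module ℝ X]
    (φ : X →ₗ[ℝ] ℝ) : Prop :=
  ∀ a b : X, ∃ M : ℝ, ∀ x : X, a ≤ x → x ≤ b → |φ x| ≤ M

/-- A submodule is a (vector) sublattice if it is closed under finite suprema. -/
def IsVectorSublattice {X : Type*} [AddCommGroup X] [Lattice X] [Module ℝ X]
    (Y : Submodule ℝ X) : Prop :=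
  ∀ x ∈ Y, ∀ y ∈ Y, x ⊔ y ∈ Y

/-- A submodule is an order ideal if it is solid. -/
def IsOrderIdeal {X : Type*} [AddCommGroup X] [Lattice X] [Module ℝ X]
    (J : Submodule ℝ X) : Prop :=
  ∀ x y : X, |x| ≤ |y| → y ∈ J → x ∈ J

/-- The Archimedean property for a vector lattice. -/
def ArchimedeanVL (X : Type*) [AddCommGroup X] [Lattice X] [Module ℝ X] : Prop :=
  ∀ x y : X, 0 ≤ x → (∀ n : ℕ, n • x ≤ y) → x = 0

/-!
If `φ` is bounded by `M` on `[-e, e]` and `a n ∈ ker φ` satisfy `|a n - x| ≤ ε • e`, then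
`|φ x| = |φ (a n - x)| ≤ ε * M` for every `ε > 0`, so `φ x = 0`.
Conversely, if `φ` is unbounded on `[a, b]`, rescaling points `u - a ∈ [0, b - a]` where `φ` is
large yields `c n` with `φ (c n) = 1` and `|c n| ≤ (1 / (n + 1)) • (b - a)`; then the elements
`c n - c 0` of `ker φ` converge relatively uniformly to `-c 0 ∉ ker φ`.
-/

open Filter Topology

/-- `a n` converges relatively uniformly to `x` with regulator `e`. -/
def RUConverges {X : Type*} [AddCommGroup X] [Lattice X] [Module ℝ X] (a : ℕ → X) (x e : X) :
    Prop :=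
  ∀ ε : ℝ, 0 < ε → ∃ N, ∀ n ≥ N, |a n - x| ≤ ε • e

section
variable {X : Type*} [AddCommGroup X] [Lattice X] [IsOrderedAddMonoid X] [Module ℝ X]
  [PosSMulMono ℝ X]

lemma ruConverges_of_abs_sub_le_smul {a : ℕ → X} {x e : X} {δ : ℕ → ℝ} (he : 0 ≤ e)
    (hδ : Tendsto δ atTop (𝓝 0)) (h : ∀ n, |a n - x| ≤ δ n • e) : RUConverges a x e := by
  intro ε hε
  obtain ⟨N, hN⟩ := eventually_atTop.1 (hδ.eventually (ge_mem_nhds hε))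
  exact ⟨N, fun n hn => (h n).trans (smul_le_smul_of_nonneg_right (hN n hn) he)⟩

lemma abs_smul_le_smul_of_nonneg_of_le {r s : ℝ} {w e : X} (hrs : |r| ≤ s) (hw : 0 ≤ w)
    (hwe : w ≤ e) : |r • w| ≤ s • e := by
  have key : ∀ t : ℝ, t ≤ s → t • w ≤ s • e := fun t ht =>
    (smul_le_smul_of_nonneg_right ht hw).trans
      (smul_le_smul_of_nonneg_left hwe ((abs_nonneg r).trans hrs))
  refine abs_le'.2 ⟨key r ((le_abs_self r).trans hrs), ?_⟩
  rw [← neg_smul]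
  exact key (-r) ((neg_le_abs r).trans hrs)

lemma abs_apply_le_mul_of_abs_le_smul {φ : X →ₗ[ℝ] ℝ} {e y : X} {M ε : ℝ}
    (hM : ∀ z, -e ≤ z → z ≤ e → |φ z| ≤ M) (hε : 0 < ε) (hy : |y| ≤ ε • e) :
    |φ y| ≤ ε * M := by
  obtain ⟨hle, hneg⟩ := abs_le'.1 hy
  have hz : |φ (ε⁻¹ • y)| ≤ M :=
    hM _ ((le_inv_smul_iff_of_pos hε).2 (by rw [smul_neg]; exact neg_le.1 hneg))
      ((inv_smul_le_iff_of_pos hε).2 hle)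
  rwa [map_smul, smul_eq_mul, abs_mul, abs_inv, abs_of_pos hε, inv_mul_le_iff₀ hε] at hz

lemma exists_apply_eq_one_abs_le_smul {φ : X →ₗ[ℝ] ℝ} {a b : X}
    (hφ : ∀ M, ∃ x, a ≤ x ∧ x ≤ b ∧ M < |φ x|) {δ : ℝ} (hδ : 0 < δ) :
    ∃ c, φ c = 1 ∧ |c| ≤ δ • (b - a) := by
  obtain ⟨u, hau, hub, hu⟩ := hφ (δ⁻¹ + |φ a|)
  have ht : δ⁻¹ < |φ (u - a)| := by
    rw [map_sub]
    linarith [abs_sub_abs_le_abs_sub (φ u) (φ a)]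
  have ht0 : φ (u - a) ≠ 0 := abs_pos.1 ((inv_pos.2 hδ).trans ht)
  refine ⟨(φ (u - a))⁻¹ • (u - a), by rw [map_smul, smul_eq_mul, inv_mul_cancel₀ ht0],
    abs_smul_le_smul_of_nonneg_of_le ?_ (sub_nonneg.2 hau) (sub_le_sub_right hub a)⟩
  rw [abs_inv]
  exact inv_le_of_inv_le₀ hδ ht.le

theorem OrderBoundedFunc.ruClosed_ker {φ : X →ₗ[ℝ] ℝ} (hφ : OrderBoundedFunc φ) :
    RUClosed (LinearMap.ker φ : Set X) := by
  intro x a e he ha hconv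
  obtain ⟨M, hM⟩ := hφ (-e) e
  have hbound : ∀ ε > 0, |φ x| ≤ ε * M := fun ε hε => by
    obtain ⟨N, hN⟩ := hconv ε hε
    have := abs_apply_le_mul_of_abs_le_smul hM hε (hN N le_rfl)
    rwa [map_sub, LinearMap.mem_ker.1 (ha N), zero_sub, abs_neg] at this
  have hlim : Tendsto (fun ε : ℝ => ε * M) (𝓝[>] 0) (𝓝 0) := by
    simpa using ((continuous_mul_const M).tendsto 0).mono_left nhdsWithin_le_nhds
  exact abs_nonpos_iff.1 (ge_of_tendsto hlim (eventually_nhdsWithin_of_forall hbound))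

theorem orderBoundedFunc_of_ruClosed_ker {φ : X →ₗ[ℝ] ℝ}
    (hφ : RUClosed (LinearMap.ker φ : Set X)) : OrderBoundedFunc φ := by
  intro a b
  by_contra! hunb
  obtain ⟨x, hax, hxb, -⟩ := hunb 0
  have hab : 0 ≤ b - a := sub_nonneg.2 (hax.trans hxb)
  choose c hc1 hc using fun n : ℕ =>
    exists_apply_eq_one_abs_le_smul hunb (Nat.one_div_pos_of_nat (α := ℝ) (n := n))
  have hmem : -c 0 ∈ (LinearMap.ker φ : Set X) :=
    hφ _ (fun n => c n - c 0) (b - a) hab (fun n => by simp [hc1])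
      (ruConverges_of_abs_sub_le_smul hab tendsto_one_div_add_atTop_nhds_zero_nat
        (fun n => by simpa using hc n))
  simp [hc1] at hmem

end

theorem stmt10_general {X : Type*} [AddCommGroup X] [Lattice X]
    [CovariantClass X X (· + ·) (· ≤ ·)] [Module ℝ X] [PosSMulMono ℝ X] (φ : X →ₗ[ℝ] ℝ) :
    OrderBoundedFunc φ ↔ RUClosed (LinearMap.ker φ : Set X) :=
  have : IsOrderedAddMonoid X :=
    { add_le_add_left := fun _ _ h c => by simpa only [add_comm _ c] using add_le_add_left h c }
  ⟨OrderBoundedFunc.ruClosed_ker, orderBoundedFunc_of_ruClosed_ker⟩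

theorem stmt10 {X : Type*} [AddCommGroup X] [Lattice X]
    [CovariantClass X X (· + ·) (· ≤ ·)] [Module ℝ X] [PosSMulMono ℝ X] (hArch : ArchimedeanVL X) (φ : X →ₗ[ℝ] ℝ) :
    OrderBoundedFunc φ ↔ RUClosed (LinearMap.ker φ : Set X) :=
  stmt10_general φ
end

section
/- Let Y and Z be subspaces of an Archimedean vector lattice X such that Y is uniformly closed and Z is finite-dimensional. Then Y + Z is uniformly closed. -/
/-!
Adjoin one vector `z ∉ Y` at a time. If `y n + c n • z → x` relatively uniformly with `y n ∈ Y`,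
either `|c n| → ∞`, and then `-(c n)⁻¹ • y n → z` would put `z` in `Y`; or `c` is frequently
bounded, so by Bolzano–Weierstrass `c n → l` along a subsequence, along which `y n → x - l • z`,
and uniform closedness of `Y` gives `x ∈ Y + ℝ z`.
-/

open Filter Topology

section VectorLattice

variable {X : Type*} [AddCommGroup X] [Lattice X] [Module ℝ X]

def RUTendsto (a : ℕ → X) (x e : X) : Prop :=
  ∀ ε : ℝ, 0 < ε → ∀ᶠ n in atTop, |a n - x| ≤ ε • e

theorem RUClosed.mem_of_ruTendsto {A : Set X} (hA : RUClosed A) {a : ℕ → X} {x e : X}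
    (he : 0 ≤ e) (ha : ∀ n, a n ∈ A) (hx : RUTendsto a x e) : x ∈ A :=
  hA x a e he ha fun ε hε => eventually_atTop.1 (hx ε hε)

namespace RUTendsto

variable {a b : ℕ → X} {x y e f : X}

theorem comp_strictMono (h : RUTendsto a x e) {φ : ℕ → ℕ} (hφ : StrictMono φ) :
    RUTendsto (a ∘ φ) x e :=
  fun ε hε => hφ.tendsto_atTop.eventually (h ε hε)

theorem mono_abs (h : RUTendsto a x e) (hb : ∀ᶠ n in atTop, |b n - y| ≤ |a n - x|) :
    RUTendsto b y e := fun ε hε => by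
  filter_upwards [h ε hε, hb] with n han hbn using hbn.trans han

variable [IsOrderedAddMonoid X]

theorem sub (ha : RUTendsto a x e) (hb : RUTendsto b y f) :
    RUTendsto (a - b) (x - y) (e + f) := fun ε hε => by
  filter_upwards [ha ε hε, hb ε hε] with n han hbn
  calc |(a - b) n - (x - y)| = |(a n - x) + -(b n - y)| := by
        rw [Pi.sub_apply, sub_sub_sub_comm, sub_eq_add_neg]
    _ ≤ |a n - x| + |b n - y| := (abs_add_le _ _).trans_eq (by rw [abs_neg])
    _ ≤ ε • e + ε • f := add_le_add han hbn
    _ = ε • (e + f) := (smul_add ε e f).symm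

theorem eventually_abs_le (h : RUTendsto a x e) : ∀ᶠ n in atTop, |a n| ≤ |x| + e := by
  filter_upwards [h 1 one_pos] with n hn
  calc |a n| = |(a n - x) + x| := by rw [sub_add_cancel]
    _ ≤ |a n - x| + |x| := abs_add_le _ _
    _ ≤ 1 • e + |x| := add_le_add_left hn _
    _ = |x| + e := by rw [one_smul, add_comm]

end RUTendsto

variable [IsOrderedAddMonoid X] [PosSMulMono ℝ X]

-- Mathlib's `abs_smul` assumes a linear order on `X`.
theorem abs_smul' (c : ℝ) (a : X) : |c • a| = |c| • |a| := by
  have key : ∀ {c : ℝ}, 0 ≤ c → |c • a| = c • |a| := by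
    intro c hc
    rcases hc.eq_or_lt with rfl | hc
    · simp
    · rw [abs, abs, ← smul_neg]
      exact ((OrderIso.smulRight (β := X) hc).map_sup a (-a)).symm
  rcases le_total 0 c with hc | hc
  · rw [key hc, abs_of_nonneg hc]
  · rw [← abs_neg c, abs_of_nonneg (neg_nonneg.2 hc), ← key (neg_nonneg.2 hc), neg_smul, abs_neg]

theorem ruTendsto_smul_of_tendsto_zero {t : ℕ → ℝ} (ht : Tendsto t atTop (𝓝 0)) {a : ℕ → X}
    {u : X} (ha : ∀ᶠ n in atTop, |a n| ≤ u) : RUTendsto (fun n => t n • a n) 0 u := by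
  intro ε hε
  filter_upwards [ha, (Metric.tendsto_nhds.1 ht) ε hε] with n han htn
  rw [Real.dist_eq, sub_zero] at htn
  calc |t n • a n - 0| = |t n| • |a n| := by rw [sub_zero, abs_smul']
    _ ≤ |t n| • u := smul_le_smul_of_nonneg_left han (abs_nonneg _)
    _ ≤ ε • u := smul_le_smul_of_nonneg_right htn.le ((abs_nonneg _).trans han)

theorem ruTendsto_smul_const {c : ℕ → ℝ} {l : ℝ} (hc : Tendsto c atTop (𝓝 l)) (z : X) :
    RUTendsto (fun n => c n • z) (l • z) |z| := by
  refine (ruTendsto_smul_of_tendsto_zero (tendsto_sub_nhds_zero_iff.2 hc)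
    (Eventually.of_forall fun _ => le_rfl)).mono_abs (Eventually.of_forall fun n => ?_)
  rw [sub_zero, sub_smul]

section Submodule

variable {Y : Submodule ℝ X} {y : ℕ → X} {c : ℕ → ℝ} {x z e : X}

theorem RUClosed.sub_smul_mem_of_tendsto (hY : RUClosed (Y : Set X)) (hy : ∀ n, y n ∈ Y)
    (he : 0 ≤ e) (hx : RUTendsto (fun n => y n + c n • z) x e) {l : ℝ}
    (hc : Tendsto c atTop (𝓝 l)) : x - l • z ∈ Y := by
  refine hY.mem_of_ruTendsto (add_nonneg he (abs_nonneg z)) hy ?_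
  simpa [Pi.sub_def] using hx.sub (ruTendsto_smul_const hc z)

theorem RUClosed.mem_of_tendsto_abs_atTop (hY : RUClosed (Y : Set X)) (hy : ∀ n, y n ∈ Y)
    (he : 0 ≤ e) (hx : RUTendsto (fun n => y n + c n • z) x e)
    (hc : Tendsto (fun n => |c n|) atTop atTop) : z ∈ Y := by
  have hinv : Tendsto (fun n => -(c n)⁻¹) atTop (𝓝 0) :=
    squeeze_zero_norm (fun n => by simp) (tendsto_inv_atTop_zero.comp hc)
  refine hY.mem_of_ruTendsto (add_nonneg (abs_nonneg x) he)
    (fun n => Y.smul_mem (-(c n)⁻¹) (hy n))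
    ((ruTendsto_smul_of_tendsto_zero hinv hx.eventually_abs_le).mono_abs ?_)
  filter_upwards [hc.eventually_gt_atTop 0] with n hn
  rw [abs_pos] at hn
  rw [smul_add, smul_smul, neg_mul, inv_mul_cancel₀ hn, neg_one_smul, ← sub_eq_add_neg, sub_zero]

theorem RUClosed.sup_span_singleton (hY : RUClosed (Y : Set X)) (z : X) :
    RUClosed ((Y ⊔ ℝ ∙ z : Submodule ℝ X) : Set X) := by
  by_cases hz : z ∈ Y
  · rwa [sup_eq_left.2 ((Submodule.span_singleton_le_iff_mem z Y).2 hz)]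
  intro x a e he ha hx
  replace hx : RUTendsto a x e := fun ε hε => eventually_atTop.2 (hx ε hε)
  have hdec : ∀ n, ∃ y ∈ Y, ∃ c : ℝ, y + c • z = a n := fun n => by
    obtain ⟨y, hy, w, hw, hyw⟩ := Submodule.mem_sup.1 (ha n)
    obtain ⟨c, rfl⟩ := Submodule.mem_span_singleton.1 hw
    exact ⟨y, hy, c, hyw⟩
  choose y hy c hc using hdec
  obtain rfl : a = fun n => y n + c n • z := funext fun n => (hc n).symm
  by_cases hunb : Tendsto (fun n => |c n|) atTop atTop
  · exact absurd (hY.mem_of_tendsto_abs_atTop hy he hx hunb) hz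
  simp only [tendsto_atTop, not_forall, not_eventually, not_le] at hunb
  obtain ⟨M, hM⟩ := hunb
  obtain ⟨l, -, φ, hφ, hl⟩ := tendsto_subseq_of_frequently_bounded (x := c)
    (Metric.isBounded_closedBall (x := 0) (r := M)) (hM.mono fun n hn => by simpa using hn.le)
  have hxl : x - l • z ∈ Y :=
    hY.sub_smul_mem_of_tendsto (fun n => hy (φ n)) he (hx.comp_strictMono hφ) hl
  exact Submodule.mem_sup.2
    ⟨_, hxl, l • z, Submodule.mem_span_singleton.2 ⟨l, rfl⟩, sub_add_cancel x _⟩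

theorem RUClosed.sup_of_fg (hY : RUClosed (Y : Set X)) {Z : Submodule ℝ X} (hZ : Z.FG) :
    RUClosed ((Y ⊔ Z : Submodule ℝ X) : Set X) := by
  classical
  obtain ⟨s, rfl⟩ := hZ
  induction s using Finset.induction_on with
  | empty => simpa using hY
  | insert z s _ ih =>
    rw [Finset.coe_insert, Submodule.span_insert, sup_comm (ℝ ∙ z), ← sup_assoc]
    exact ih.sup_span_singleton z

end Submodule

end VectorLattice

theorem stmt11_general {X : Type*} [AddCommGroup X] [Lattice X]
    [CovariantClass X X (· + ·) (· ≤ ·)] [Module ℝ X] [PosSMulMono ℝ X] (Y Z : Submodule ℝ X)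
    (hY : RUClosed (Y : Set X)) (hZ : FiniteDimensional ℝ Z) :
    RUClosed ((Y ⊔ Z : Submodule ℝ X) : Set X) :=
  have : IsOrderedAddMonoid X := { add_le_add_left := fun _ _ h c => add_le_add_left h c }
  hY.sup_of_fg ((Submodule.fg_iff_finiteDimensional Z).2 hZ)

theorem stmt11 {X : Type*} [AddCommGroup X] [Lattice X]
    [CovariantClass X X (· + ·) (· ≤ ·)] [Module ℝ X] [PosSMulMono ℝ X] (hArch : ArchimedeanVL X) (Y Z : Submodule ℝ X)
    (hY : RUClosed (Y : Set X)) (hZ : FiniteDimensional ℝ Z) :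
    RUClosed ((Y ⊔ Z : Submodule ℝ X) : Set X) :=
  stmt11_general Y Z hY hZ
end

section
/- A subspace Y of codimension 1 in an Archimedean vector lattice X is full (i.e., x, y ∈ Y with x ≤ y implies [x,y] ⊆ Y) if and only if Y is the kernel of a positive or negative linear functional. -/
/-! Codimension one makes `Y` the kernel of a functional `φ`, and `ker φ` is order convex exactly
when `φ` is monotone or antitone: if `φ a < 0 < φ c` with `a, c ≥ 0`, then `c + t • a` with
`t = φ c / -φ a ≥ 0` lies in `ker φ` above `c ≥ 0`, so convexity would force `φ c = 0`. -/

theorem Submodule.exists_ker_eq_of_finrank_quotient_eq_one {K V : Type*} [Field K]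
    [AddCommGroup V] [Module K V] {W : Submodule K V} (h : Module.finrank K (V ⧸ W) = 1) :
    ∃ f : V →ₗ[K] K, LinearMap.ker f = W := by
  have : FiniteDimensional K (V ⧸ W) := Module.finite_of_finrank_eq_succ h
  let e := LinearEquiv.ofFinrankEq (V ⧸ W) K (by rw [h, Module.finrank_self])
  exact ⟨e.toLinearMap ∘ₗ W.mkQ, by rw [LinearEquiv.ker_comp, Submodule.ker_mkQ]⟩

theorem LinearMap.ordConnected_ker_iff {K X : Type*} [Field K] [LinearOrder K]
    [IsStrictOrderedRing K] [AddCommGroup X] [PartialOrder X] [IsOrderedAddMonoid X]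
    [Module K X] [PosSMulMono K X] (φ : X →ₗ[K] K) :
    (LinearMap.ker φ : Set X).OrdConnected ↔ Monotone φ ∨ Antitone φ := by
  refine ⟨fun h => ?_, ?_⟩
  · rw [monotone_iff_map_nonneg, antitone_iff_map_nonpos]
    by_contra! ⟨⟨a, ha, hφa⟩, ⟨c, hc, hφc⟩⟩
    set t := φ c / -φ a
    have hker : c + t • a ∈ LinearMap.ker φ := by
      have : φ a ≠ 0 := hφa.ne
      simp only [LinearMap.mem_ker, map_add, map_smul, smul_eq_mul, t]
      field_simp
      ring
    have hc_le : c ≤ c + t • a :=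
      le_add_of_nonneg_right (smul_nonneg (div_nonneg hφc.le (neg_nonneg.2 hφa.le)) ha)
    exact hφc.ne' (h.out (zero_mem _) hker ⟨hc, hc_le⟩)
  · rintro (hφ | hφ)
    · exact Set.ordConnected_singleton.preimage_mono hφ
    · exact Set.ordConnected_singleton.preimage_anti hφ

theorem stmt13_general {X : Type*} [AddCommGroup X] [Lattice X]
    [CovariantClass X X (· + ·) (· ≤ ·)] [Module ℝ X] [PosSMulMono ℝ X] (Y : Submodule ℝ X)
    (hcodim : Module.finrank ℝ (X ⧸ Y) = 1) :
    (∀ x y z : X, x ∈ Y → y ∈ Y → x ≤ z → z ≤ y → z ∈ Y) ↔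
      ∃ φ : X →ₗ[ℝ] ℝ,
        ((∀ x : X, 0 ≤ x → 0 ≤ φ x) ∨ (∀ x : X, 0 ≤ x → φ x ≤ 0)) ∧
        Y = LinearMap.ker φ := by
  have : IsOrderedAddMonoid X := { add_le_add_left := fun _ _ h c => add_le_add_left h c }
  have full_ker_iff (ψ : X →ₗ[ℝ] ℝ) :
      (∀ x y z : X, x ∈ LinearMap.ker ψ → y ∈ LinearMap.ker ψ → x ≤ z → z ≤ y →
        z ∈ LinearMap.ker ψ) ↔ (∀ x : X, 0 ≤ x → 0 ≤ ψ x) ∨ (∀ x : X, 0 ≤ x → ψ x ≤ 0) := by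
    rw [← monotone_iff_map_nonneg, ← antitone_iff_map_nonpos, ← ψ.ordConnected_ker_iff]
    exact ⟨fun h => ⟨fun x hx y hy z hz => h x y z hx hy hz.1 hz.2⟩,
      fun h x y z hx hy hxz hzy => h.out hx hy ⟨hxz, hzy⟩⟩
  obtain ⟨φ, rfl⟩ := Submodule.exists_ker_eq_of_finrank_quotient_eq_one hcodim
  rw [full_ker_iff]
  refine ⟨fun h => ⟨φ, h, rfl⟩, ?_⟩
  rintro ⟨ψ, hψ, hker⟩
  rwa [← full_ker_iff, hker, full_ker_iff]

theorem stmt13 {X : Type*} [AddCommGroup X] [Lattice X]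
    [CovariantClass X X (· + ·) (· ≤ ·)] [Module ℝ X] [PosSMulMono ℝ X] (hArch : ArchimedeanVL X) (Y : Submodule ℝ X)
    (hcodim : Module.finrank ℝ (X ⧸ Y) = 1) :
    (∀ x y z : X, x ∈ Y → y ∈ Y → x ≤ z → z ≤ y → z ∈ Y) ↔
      ∃ φ : X →ₗ[ℝ] ℝ,
        ((∀ x : X, 0 ≤ x → 0 ≤ φ x) ∨ (∀ x : X, 0 ≤ x → φ x ≤ 0)) ∧
        Y = LinearMap.ker φ :=
  stmt13_general Y hcodim
end

section
/- Let Y be a sublattice of codimension m in a vector lattice X. Then any pairwise disjoint set of vectors contained in X \ Y has at most 2m elements. -/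
section Disjoint

variable {α : Type*} [Lattice α] [AddCommGroup α] [IsOrderedAddMonoid α] {a b c : α}

lemma add_inf_eq_zero (ha : a ⊓ c = 0) (hb : b ⊓ c = 0) : (a + b) ⊓ c = 0 := by
  have hb0 : 0 ≤ b := hb ▸ inf_le_left
  have hab : (a + b) ⊓ c ≤ b :=
    calc (a + b) ⊓ c ≤ (a + b) ⊓ (c + b) := inf_le_inf_left _ (le_add_of_nonneg_right hb0)
      _ = b := by rw [← inf_add, ha, zero_add]
  refine le_antisymm (hb ▸ le_inf hab inf_le_right) (le_inf ?_ (hb ▸ inf_le_right))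
  exact add_nonneg (ha ▸ inf_le_left) hb0

lemma Finset.sum_inf_eq_zero {ι : Type*} (s : Finset ι) (f : ι → α) (hc : 0 ≤ c)
    (h : ∀ i ∈ s, f i ⊓ c = 0) : (∑ i ∈ s, f i) ⊓ c = 0 :=
  Finset.sum_induction f (· ⊓ c = 0) (fun _ _ => add_inf_eq_zero) (inf_eq_left.2 hc) h

lemma posPart_sub_eq_self_of_inf_eq_zero (h : a ⊓ b = 0) : (a - b)⁺ = a := by
  have := inf_add_sup a b
  rw [h, zero_add, sup_eq_add_posPart_sub] at this
  exact add_left_cancel (this.trans (add_comm a b))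

variable {𝕜 : Type*} [Field 𝕜] [LinearOrder 𝕜] [IsStrictOrderedRing 𝕜] [Module 𝕜 α]
  [PosSMulMono 𝕜 α] {r t : 𝕜}

lemma smul_inf_smul_eq_zero (hr : 0 ≤ r) (ht : 0 ≤ t) (h : a ⊓ b = 0) :
    (r • a) ⊓ (t • b) = 0 := by
  have ha : 0 ≤ a := h ▸ inf_le_left
  have hb : 0 ≤ b := h ▸ inf_le_right
  have hs : 0 < r + t + 1 := by linarith
  refine le_antisymm ?_ (le_inf (smul_nonneg hr ha) (smul_nonneg ht hb))
  calc (r • a) ⊓ (t • b) ≤ ((r + t + 1) • a) ⊓ ((r + t + 1) • b) :=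
        inf_le_inf (smul_le_smul_of_nonneg_right (by linarith) ha)
          (smul_le_smul_of_nonneg_right (by linarith) hb)
    _ = (r + t + 1) • (a ⊓ b) := ((OrderIso.smulRight hs).map_inf a b).symm
    _ = 0 := by rw [h, smul_zero]

lemma posPart_sum_smul_of_pairwise_inf_eq_zero {ι : Type*} [Fintype ι] {z : ι → α}
    (hz0 : ∀ i, 0 ≤ z i) (hz : Pairwise fun i j => z i ⊓ z j = 0) (c : ι → 𝕜) :
    (∑ i, c i • z i)⁺ = ∑ i, (c i)⁺ • z i := by
  have hterm : ∀ i j, ((c i)⁺ • z i) ⊓ ((c j)⁻ • z j) = 0 := by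
    intro i j
    rcases eq_or_ne i j with rfl | hij
    · rcases le_total (c i) 0 with h | h
      · rw [posPart_eq_zero.2 h, zero_smul]
        exact inf_eq_left.2 (smul_nonneg (negPart_nonneg _) (hz0 i))
      · rw [negPart_eq_zero.2 h, zero_smul]
        exact inf_eq_right.2 (smul_nonneg (posPart_nonneg _) (hz0 i))
    · exact smul_inf_smul_eq_zero (posPart_nonneg _) (negPart_nonneg _) (hz hij)
  have hdisj : (∑ i, (c i)⁺ • z i) ⊓ ∑ j, (c j)⁻ • z j = 0 := by
    refine Finset.sum_inf_eq_zero _ _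
      (Finset.sum_nonneg fun j _ => smul_nonneg (negPart_nonneg _) (hz0 j)) fun i _ => ?_
    rw [inf_comm]
    refine Finset.sum_inf_eq_zero _ _ (smul_nonneg (posPart_nonneg _) (hz0 i)) fun j _ => ?_
    rw [inf_comm]
    exact hterm i j
  rw [← posPart_sub_eq_self_of_inf_eq_zero hdisj, ← Finset.sum_sub_distrib]
  simp only [← sub_smul, posPart_sub_negPart]

end Disjoint

section PositiveSupports

variable {𝕜 ι : Type*} [Field 𝕜] [LinearOrder 𝕜] {W : Submodule 𝕜 (ι → 𝕜)}

def posSupports (W : Submodule 𝕜 (ι → 𝕜)) : Set (Finset ι) :=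
  {S | ∃ w ∈ W, 0 ≤ w ∧ w ≠ 0 ∧ (S : Set ι) = Function.support w}

lemma one_lt_card_of_mem_posSupports [DecidableEq ι] (hW : ∀ i r, Pi.single i r ∈ W → r = 0)
    {S : Finset ι} (hS : S ∈ posSupports W) : 1 < S.card := by
  obtain ⟨w, hwW, -, hw0, hSw⟩ := hS
  obtain ⟨i, hi⟩ := Function.ne_iff.1 hw0
  have hiS : i ∈ S := by simpa [← Finset.mem_coe, hSw] using hi
  by_contra! hcard
  have hsingle : w = Pi.single i (w i) := by
    ext j
    rcases eq_or_ne j i with rfl | hji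
    · simp
    · have hjS : j ∉ S := fun hjS => hji (Finset.card_le_one.1 hcard j hjS i hiS)
      simpa [Pi.single_eq_of_ne hji, ← Finset.mem_coe, hSw] using hjS
  exact hi (hW i (w i) (hsingle ▸ hwW))

variable [IsStrictOrderedRing 𝕜]

lemma inter_mem_posSupports [DecidableEq ι] (hW : ∀ w ∈ W, w⁺ ∈ W) {S T : Finset ι}
    (hS : S ∈ posSupports W) (hT : T ∈ posSupports W) (hST : (S ∩ T).Nonempty) :
    S ∩ T ∈ posSupports W := by
  obtain ⟨u, huW, hu0, -, hSu⟩ := hS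
  obtain ⟨v, hvW, hv0, -, hTv⟩ := hT
  have hsupp : ((S ∩ T : Finset ι) : Set ι) = Function.support (u ⊓ v) := by
    ext i
    have hui : 0 < u i ↔ u i ≠ 0 := (hu0 i).lt_iff_ne'
    have hvi : 0 < v i ↔ v i ≠ 0 := (hv0 i).lt_iff_ne'
    simp only [Finset.coe_inter, hSu, hTv, Set.mem_inter_iff, Function.mem_support, Pi.inf_apply]
    rw [← hui, ← hvi, ← lt_min_iff]
    exact (le_min (hu0 i) (hv0 i)).lt_iff_ne'
  refine ⟨u ⊓ v, ?_, le_inf hu0 hv0, ?_, hsupp⟩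
  · rw [inf_eq_sub_posPart_sub]
    exact W.sub_mem huW (hW _ (W.sub_mem huW hvW))
  · obtain ⟨i, hi⟩ := hST
    intro h
    simpa [h] using (Set.ext_iff.1 hsupp i).1 hi

lemma disjoint_of_minimal_posSupports [DecidableEq ι] (hW : ∀ w ∈ W, w⁺ ∈ W) {S T : Finset ι}
    (hS : Minimal (· ∈ posSupports W) S) (hT : Minimal (· ∈ posSupports W) T) (hST : S ≠ T) :
    Disjoint S T := by
  by_contra h
  have hmem :=
    inter_mem_posSupports hW hS.prop hT.prop (Finset.not_disjoint_iff_nonempty_inter.1 h)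
  exact hST ((hS.eq_of_le hmem Finset.inter_subset_left).symm.trans
    (hT.eq_of_le hmem Finset.inter_subset_right))

lemma exists_transversal_two_mul_card_le [Fintype ι] [DecidableEq ι] (𝒜 : Finset (Finset ι))
    (h𝒜 : (𝒜 : Set (Finset ι)).PairwiseDisjoint id) (hcard : ∀ S ∈ 𝒜, 1 < S.card) :
    ∃ I : Finset ι, 2 * I.card ≤ Fintype.card ι ∧ ∀ S ∈ 𝒜, ∃ i ∈ I, i ∈ S := by
  choose f hf using fun S : 𝒜 => Finset.card_pos.1 (zero_lt_one.trans (hcard S S.2))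
  refine ⟨Finset.univ.image f, ?_, fun S hS => ⟨f ⟨S, hS⟩, Finset.mem_image_of_mem f
    (Finset.mem_univ _), hf ⟨S, hS⟩⟩⟩
  calc 2 * (Finset.univ.image f).card ≤ ∑ S ∈ 𝒜, 2 := by
        rw [Finset.sum_const, smul_eq_mul, mul_comm]
        refine Nat.mul_le_mul_right 2 (Finset.card_image_le.trans ?_)
        simp
    _ ≤ ∑ S ∈ 𝒜, S.card := Finset.sum_le_sum hcard
    _ = (𝒜.biUnion id).card := (Finset.card_biUnion h𝒜).symm
    _ ≤ Fintype.card ι := Finset.card_le_univ _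

lemma finrank_le_card_of_forall_exists_ne_zero (hW : ∀ w ∈ W, w⁺ ∈ W) (I : Finset ι)
    (hI : ∀ w ∈ W, 0 ≤ w → w ≠ 0 → ∃ i ∈ I, w i ≠ 0) : Module.finrank 𝕜 W ≤ I.card := by
  have hzero : ∀ w ∈ W, (∀ i ∈ I, w i = 0) → w⁺ = 0 := by
    intro w hw hwI
    by_contra hne
    obtain ⟨i, hi, hwi⟩ := hI _ (hW w hw) (posPart_nonneg w) hne
    simp [hwI i hi] at hwi
  let restrict : W →ₗ[𝕜] (I → 𝕜) := LinearMap.funLeft 𝕜 𝕜 ((↑) : I → ι) ∘ₗ W.subtype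
  have hinj : Function.Injective restrict := by
    rw [← LinearMap.ker_eq_bot, LinearMap.ker_eq_bot']
    rintro ⟨w, hw⟩ hrw
    have hwI : ∀ i ∈ I, w i = 0 := fun i hi => congr_fun hrw ⟨i, hi⟩
    have hpos := hzero w hw hwI
    have hneg := hzero (-w) (W.neg_mem hw) (by simpa using hwI)
    rw [posPart_neg] at hneg
    ext1
    simpa [hpos, hneg] using (posPart_sub_negPart w).symm
  simpa using LinearMap.finrank_le_finrank_of_injective hinj

theorem two_mul_finrank_le_card [Fintype ι] [DecidableEq ι] (hW : ∀ w ∈ W, w⁺ ∈ W)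
    (hsingle : ∀ i r, Pi.single i r ∈ W → r = 0) : 2 * Module.finrank 𝕜 W ≤ Fintype.card ι := by
  classical
  let 𝒜 := {S | Minimal (· ∈ posSupports W) S}.toFinset
  have h𝒜 : ∀ S, S ∈ 𝒜 ↔ Minimal (· ∈ posSupports W) S := by simp [𝒜]
  obtain ⟨I, hIcard, hI⟩ := exists_transversal_two_mul_card_le 𝒜
    (fun S hS T hT => disjoint_of_minimal_posSupports hW ((h𝒜 S).1 hS) ((h𝒜 T).1 hT))
    (fun S hS => one_lt_card_of_mem_posSupports hsingle ((h𝒜 S).1 hS).prop)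
  refine (Nat.mul_le_mul_left 2 (finrank_le_card_of_forall_exists_ne_zero hW I ?_)).trans hIcard
  intro w hw hw0 hne
  obtain ⟨T, hTw, hT⟩ := exists_minimal_le_of_wellFoundedLT (· ∈ posSupports W)
    (Function.support w).toFinset ⟨w, hw, hw0, hne, by simp⟩
  obtain ⟨i, hiI, hiT⟩ := hI T ((h𝒜 T).2 hT)
  exact ⟨i, hiI, by simpa using hTw hiT⟩

end PositiveSupports

section Sublattice

variable {X : Type*} [AddCommGroup X] [Lattice X] [Module ℝ X] {Y : Submodule ℝ X}

lemma IsVectorSublattice.posPart_mem (hY : IsVectorSublattice Y) {x : X} (hx : x ∈ Y) :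
    x⁺ ∈ Y :=
  hY x hx 0 Y.zero_mem

variable [IsOrderedAddMonoid X]

lemma exists_nonneg_le_abs_notMem {x : X} (hx : x ∉ Y) : ∃ z, 0 ≤ z ∧ z ≤ |x| ∧ z ∉ Y := by
  by_cases hpos : x⁺ ∈ Y
  · refine ⟨x⁻, negPart_nonneg x, sup_le (neg_le_abs x) (abs_nonneg x), fun hneg => hx ?_⟩
    simpa using Y.sub_mem hpos hneg
  · exact ⟨x⁺, posPart_nonneg x, sup_le (le_abs_self x) (abs_nonneg x), hpos⟩

theorem card_le_two_mul_finrank_quotient [PosSMulMono ℝ X] [FiniteDimensional ℝ (X ⧸ Y)]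
    (hY : IsVectorSublattice Y) {ι : Type*} [Fintype ι] {z : ι → X} (hz0 : ∀ i, 0 ≤ z i)
    (hz : Pairwise fun i j => z i ⊓ z j = 0) (hzY : ∀ i, z i ∉ Y) :
    Fintype.card ι ≤ 2 * Module.finrank ℝ (X ⧸ Y) := by
  classical
  let T := Y.mkQ ∘ₗ Fintype.linearCombination ℝ z
  have hker : ∀ c, c ∈ LinearMap.ker T ↔ ∑ i, c i • z i ∈ Y := fun c => by
    simp only [T, LinearMap.mem_ker, LinearMap.comp_apply, Submodule.mkQ_apply,
      Submodule.Quotient.mk_eq_zero, Fintype.linearCombination_apply]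
  have hrelations : 2 * Module.finrank ℝ (LinearMap.ker T) ≤ Fintype.card ι := by
    refine two_mul_finrank_le_card (fun c hc => ?_) (fun i r hr => ?_)
    · rw [hker] at hc ⊢
      simpa [posPart_sum_smul_of_pairwise_inf_eq_zero hz0 hz] using hY.posPart_mem hc
    · by_contra hr0
      rw [hker, ← Fintype.linearCombination_apply, Fintype.linearCombination_apply_single] at hr
      exact hzY i ((Y.smul_mem_iff hr0).1 hr)
  have hrank := T.finrank_range_add_finrank_ker
  have hrange := Submodule.finrank_le (LinearMap.range T)
  rw [Module.finrank_fintype_fun_eq_card] at hrank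
  omega

end Sublattice

theorem stmt15 {X : Type*} [AddCommGroup X] [Lattice X]
    [CovariantClass X X (· + ·) (· ≤ ·)] [Module ℝ X] [PosSMulMono ℝ X] (Y : Submodule ℝ X) (hY : IsVectorSublattice Y)
    (m : ℕ) (hfin : FiniteDimensional ℝ (X ⧸ Y)) (hm : Module.finrank ℝ (X ⧸ Y) = m)
    (s : Finset X) (hs : ∀ x ∈ s, x ∉ Y)
    (hdisj : (s : Set X).Pairwise fun x y => |x| ⊓ |y| = 0) :
    s.card ≤ 2 * m := by
  have : IsOrderedAddMonoid X :=
    ⟨fun _ _ h c => add_le_add_left h c, fun _ _ h c => add_le_add_right h c⟩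
  choose z hz0 hz_le hzY using fun x : s => exists_nonneg_le_abs_notMem (hs x x.2)
  have hz : Pairwise fun i j => z i ⊓ z j = 0 := fun i j hij =>
    le_antisymm (hdisj i.2 j.2 (Subtype.coe_ne_coe.2 hij) ▸ inf_le_inf (hz_le i) (hz_le j))
      (le_inf (hz0 i) (hz0 j))
  simpa [hm] using card_le_two_mul_finrank_quotient hY hz0 hz hzY
end

section
/- A sublattice of R^n of codimension m contains at least n − 2m and at most n − m of the standard unit vectors. -/
/-!
The unit vectors lying in `Y` are linearly independent, which gives the upper bound.

For the lower bound, take a nonnegative `u ∈ Y` whose support `U` is inclusion-minimal. Every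
`x ∈ Y` agrees with a multiple of `u` on `U`: for `x ≥ 0`, the element `x ⊓ M • u` (with `M`
large) is supported in `U`, and subtracting the largest multiple `t • u` below it would otherwise
produce a nonnegative element of smaller support. Hence `Y` is spanned by `u` together with the
sublattice of elements of `Y` vanishing on `U`. Inducting on a set `s` carrying all supports gives
`2 dim Y ≤ |s| + #{i | eᵢ ∈ Y}`: each step lowers the dimension by one and removes the `|U| ≥ 1`
coordinates of `U`, and `|U| = 1` only when `U = {i}`, in which case `eᵢ ∈ Y`.
-/

open Module Function Set

variable {K ι : Type*}

namespace Submodule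

section SupClosed

variable [Ring K] [Lattice K] {Y : Submodule K (ι → K)}

theorem posPart_mem_of_supClosed (hY : SupClosed (Y : Set (ι → K))) {x : ι → K} (hx : x ∈ Y) :
    x⁺ ∈ Y :=
  hY hx Y.zero_mem

theorem negPart_mem_of_supClosed (hY : SupClosed (Y : Set (ι → K))) {x : ι → K} (hx : x ∈ Y) :
    x⁻ ∈ Y :=
  hY (Y.neg_mem hx) Y.zero_mem

variable [IsOrderedRing K]

theorem inf_mem_of_supClosed (hY : SupClosed (Y : Set (ι → K))) {x y : ι → K} (hx : x ∈ Y)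
    (hy : y ∈ Y) : x ⊓ y ∈ Y := by
  have : x ⊓ y = -(-x ⊔ -y) := by rw [_root_.neg_sup, neg_neg, neg_neg]
  exact this ▸ Y.neg_mem (hY (Y.neg_mem hx) (Y.neg_mem hy))

theorem exists_nonneg_ne_zero (hY : SupClosed (Y : Set (ι → K))) (hbot : Y ≠ ⊥) :
    ∃ u ∈ Y, 0 ≤ u ∧ u ≠ 0 := by
  obtain ⟨x, hx, hx0⟩ := Y.ne_bot_iff.mp hbot
  by_cases hpos : x⁺ = 0
  · refine ⟨x⁻, negPart_mem_of_supClosed hY hx, negPart_nonneg x, fun hneg => hx0 ?_⟩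
    rw [← posPart_sub_negPart x, hpos, hneg, sub_zero]
  · exact ⟨x⁺, posPart_mem_of_supClosed hY hx, posPart_nonneg x, hpos⟩

end SupClosed

section MinimalSupport

variable [Field K] [LinearOrder K]

structure IsSupportMinimal (Y : Submodule K (ι → K)) (u : ι → K) : Prop where
  mem : u ∈ Y
  nonneg : 0 ≤ u
  eq_zero_of_support_ssubset : ∀ w ∈ Y, 0 ≤ w → support w ⊂ support u → w = 0

variable {Y : Submodule K (ι → K)} {u : ι → K}

theorem IsSupportMinimal.pos_of_mem_support (hu : Y.IsSupportMinimal u) {i : ι}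
    (hi : i ∈ support u) : 0 < u i :=
  (hu.nonneg i).lt_of_ne' hi

variable [IsStrictOrderedRing K] [Finite ι]

theorem exists_isSupportMinimal_ne_zero (hY : SupClosed (Y : Set (ι → K))) (hbot : Y ≠ ⊥) :
    ∃ u, Y.IsSupportMinimal u ∧ u ≠ 0 := by
  obtain ⟨u, ⟨huY, hu0, hune⟩, hmin⟩ :=
    (InvImage.wf support wellFounded_lt).has_min {u | u ∈ Y ∧ 0 ≤ u ∧ u ≠ 0}
      (exists_nonneg_ne_zero hY hbot)
  exact ⟨u, ⟨huY, hu0, fun w hw hw0 hlt => by_contra fun hne => hmin w ⟨hw, hw0, hne⟩ hlt⟩, hune⟩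

theorem IsSupportMinimal.eq_smul_of_support_subset (hu : Y.IsSupportMinimal u) {w : ι → K}
    (hw : w ∈ Y) (hw0 : 0 ≤ w) (hsub : support w ⊆ support u) : ∃ c : K, w = c • u := by
  rcases eq_or_ne w 0 with rfl | hwne
  · exact ⟨0, by simp⟩
  have hne : (support u).Nonempty := (support_nonempty_iff.mpr hwne).mono hsub
  obtain ⟨i₀, hi₀, hle⟩ := (support u).exists_min_image (fun i => w i / u i) (toFinite _) hne
  set t := w i₀ / u i₀
  have hv0 : 0 ≤ w - t • u := by
    intro i
    by_cases hi : i ∈ support u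
    · simpa using (le_div_iff₀ (hu.pos_of_mem_support hi)).mp (hle i hi)
    · simpa [notMem_support.mp hi] using hw0 i
  have hvsub : support (w - t • u) ⊂ support u := by
    refine ssubset_iff_subset_ne.mpr ⟨fun i hi hui => hi ?_, fun h => ?_⟩
    · simp [hui, notMem_support.mp fun h => hsub h hui]
    · have : i₀ ∉ support (w - t • u) := by
        simp [t, div_mul_cancel₀ _ (hu.pos_of_mem_support hi₀).ne']
      exact this (h ▸ hi₀)
  have hvY : w - t • u ∈ Y := Y.sub_mem hw (Y.smul_mem t hu.mem)
  exact ⟨t, sub_eq_zero.mp (hu.eq_zero_of_support_ssubset _ hvY hv0 hvsub)⟩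

theorem IsSupportMinimal.exists_eqOn_smul_of_nonneg (hY : SupClosed (Y : Set (ι → K)))
    (hu : Y.IsSupportMinimal u) {p : ι → K} (hp : p ∈ Y) (hp0 : 0 ≤ p) :
    ∃ c : K, EqOn p (c • u) (support u) := by
  obtain ⟨B, hB⟩ := ((toFinite (support u)).image fun i => p i / u i).bddAbove
  set M := max B 0
  have hle : ∀ i ∈ support u, p i ≤ M * u i := fun i hi =>
    (div_le_iff₀ (hu.pos_of_mem_support hi)).mp ((hB ⟨i, hi, rfl⟩).trans (le_max_left B 0))
  have hMu0 : 0 ≤ M • u := smul_nonneg (le_max_right B 0) hu.nonneg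
  have hsub : support (p ⊓ M • u) ⊆ support u := fun i hi hui => hi (by simpa [hui] using hp0 i)
  obtain ⟨c, hc⟩ := hu.eq_smul_of_support_subset (inf_mem_of_supClosed hY hp (Y.smul_mem M hu.mem))
    (le_inf hp0 hMu0) hsub
  refine ⟨c, fun i hi => ?_⟩
  have := congrFun hc i
  simp only [Pi.inf_apply, Pi.smul_apply, smul_eq_mul, inf_of_le_left (hle i hi)] at this
  simpa using this

theorem IsSupportMinimal.exists_eqOn_smul (hY : SupClosed (Y : Set (ι → K)))
    (hu : Y.IsSupportMinimal u) {x : ι → K} (hx : x ∈ Y) :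
    ∃ c : K, EqOn x (c • u) (support u) := by
  obtain ⟨a, ha⟩ :=
    hu.exists_eqOn_smul_of_nonneg hY (posPart_mem_of_supClosed hY hx) (posPart_nonneg x)
  obtain ⟨b, hb⟩ :=
    hu.exists_eqOn_smul_of_nonneg hY (negPart_mem_of_supClosed hY hx) (negPart_nonneg x)
  refine ⟨a - b, fun i hi => ?_⟩
  rw [← posPart_sub_negPart x, Pi.sub_apply, ha hi, hb hi, sub_smul, Pi.sub_apply]

theorem IsSupportMinimal.finrank_le_finrank_inf_pi_add_one (hY : SupClosed (Y : Set (ι → K)))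
    (hu : Y.IsSupportMinimal u) :
    finrank K Y ≤ finrank K ↥(Y ⊓ pi (support u) fun _ => ⊥) + 1 := by
  set Y₀ := Y ⊓ pi (support u) fun _ => ⊥
  have hle : Y ≤ (K ∙ u) ⊔ Y₀ := by
    intro x hx
    obtain ⟨c, hc⟩ := hu.exists_eqOn_smul hY hx
    have hrest : x - c • u ∈ Y₀ :=
      ⟨Y.sub_mem hx (Y.smul_mem c hu.mem), mem_pi.mpr fun i hi => by simp [hc hi]⟩
    simpa using add_mem (mem_sup_left (smul_mem _ c (mem_span_singleton_self u)))
      (mem_sup_right hrest)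
  calc finrank K Y ≤ finrank K ↥((K ∙ u) ⊔ Y₀) := finrank_mono hle
    _ ≤ finrank K (K ∙ u) + finrank K Y₀ := finrank_add_le_finrank_add_finrank _ _
    _ ≤ 1 + finrank K Y₀ := by
      gcongr
      simpa using finrank_span_le_card ({u} : Set (ι → K))
    _ = finrank K Y₀ + 1 := add_comm _ _

end MinimalSupport

section Single

variable [Field K] [DecidableEq ι]

theorem ncard_setOf_single_mem_le_finrank [Finite ι] (Y : Submodule K (ι → K)) :
    {i | Pi.single i (1 : K) ∈ Y}.ncard ≤ finrank K Y := by
  let E := {i | Pi.single i (1 : K) ∈ Y}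
  have hli : LinearIndependent K (fun i : E => (⟨Pi.single (i : ι) 1, i.2⟩ : Y)) :=
    .of_comp Y.subtype ((Pi.linearIndependent_single_one ι K).comp _ Subtype.val_injective)
  rw [← Nat.card_coe_set_eq]
  exact_mod_cast (Nat.cast_card (α := E)).trans_le hli.cardinalMk_le_finrank

theorem single_one_mem_of_support_eq_singleton {Y : Submodule K (ι → K)} {u : ι → K} {i : ι}
    (hu : u ∈ Y) (hsupp : support u = {i}) : Pi.single i (1 : K) ∈ Y := by
  have hui : u i ≠ 0 := by simp [← mem_support, hsupp]
  convert Y.smul_mem (u i)⁻¹ hu using 1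
  funext j
  rcases eq_or_ne j i with rfl | hji
  · simp [hui]
  · have : u j = 0 := notMem_support.mp (by simpa [hsupp] using hji)
    simp [hji, this]

theorem two_le_ncard_support_add_ncard_inter [Finite ι] {Y : Submodule K (ι → K)} {u : ι → K}
    (hu : u ∈ Y) (hune : u ≠ 0) :
    2 ≤ (support u).ncard + ({i | Pi.single i (1 : K) ∈ Y} ∩ support u).ncard := by
  obtain ⟨i, hi⟩ | htwo : (∃ i, support u = {i}) ∨ 2 ≤ (support u).ncard := by
    have := (ncard_pos (toFinite _)).mpr (support_nonempty_iff.mpr hune)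
    rcases Nat.lt_or_ge (support u).ncard 2 with h | h
    · exact .inl (ncard_eq_one.mp (by omega))
    · exact .inr h
  · have : {i | Pi.single i (1 : K) ∈ Y} ∩ support u = {i} := by
      simp [hi, single_one_mem_of_support_eq_singleton hu hi]
    rw [this, hi, ncard_singleton]
  · omega

theorem setOf_single_mem_inf_pi_bot (Y : Submodule K (ι → K)) (U : Set ι) :
    {i | Pi.single i (1 : K) ∈ Y ⊓ pi U fun _ => ⊥} = {i | Pi.single i (1 : K) ∈ Y} \ U := by
  ext i
  simp only [mem_ofPred_eq, mem_inf, mem_pi, mem_bot, Pi.single_apply, mem_sdiff]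
  aesop

end Single

theorem two_mul_finrank_le_of_support_subset [Field K] [LinearOrder K] [IsStrictOrderedRing K]
    [DecidableEq ι] [Finite ι] {Y : Submodule K (ι → K)} (hY : SupClosed (Y : Set (ι → K)))
    (s : Set ι) (hs : ∀ x ∈ Y, support x ⊆ s) :
    2 * finrank K Y ≤ s.ncard + {i | Pi.single i (1 : K) ∈ Y}.ncard := by
  rcases eq_or_ne Y ⊥ with rfl | hbot
  · simp
  obtain ⟨u, hu, hune⟩ := exists_isSupportMinimal_ne_zero hY hbot
  set U := support u
  set E := {i | Pi.single i (1 : K) ∈ Y}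
  have hUs : U ⊆ s := hs u hu.mem
  have hU : 2 ≤ U.ncard + (E ∩ U).ncard := two_le_ncard_support_add_ncard_inter hu.mem hune
  have hY₀ : SupClosed ((Y ⊓ pi U fun _ => ⊥ : Submodule K (ι → K)) : Set (ι → K)) :=
    hY.inter (supClosed_pi fun _ _ => supClosed_singleton)
  have ih : 2 * finrank K ↥(Y ⊓ pi U fun _ => ⊥) ≤ (s \ U).ncard + (E \ U).ncard := by
    rw [← setOf_single_mem_inf_pi_bot]
    refine two_mul_finrank_le_of_support_subset hY₀ (s \ U) fun x hx => ?_
    obtain ⟨hxY, hxU⟩ := mem_inf.mp hx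
    exact subset_sdiff.mpr ⟨hs x hxY, disjoint_left.mpr fun i hi hiU => hi (mem_pi.mp hxU i hiU)⟩
  have hrank : finrank K Y ≤ finrank K ↥(Y ⊓ pi U fun _ => ⊥) + 1 :=
    hu.finrank_le_finrank_inf_pi_add_one hY
  have := ncard_sdiff_add_ncard_of_subset hUs
  have := ncard_inter_add_ncard_sdiff_eq_ncard E U
  omega
termination_by s.ncard
decreasing_by
  exact ncard_lt_ncard (hUs.sdiff_ssubset_of_nonempty (support_nonempty_iff.mpr hune))

end Submodule

/-- A sublattice of `ℝⁿ` of codimension `m` contains at least `n - 2m` and at most `n - m`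
of the standard unit vectors. -/
theorem stmt16 {n : ℕ} (Y : Submodule ℝ (Fin n → ℝ))
    (hlat : ∀ x ∈ Y, ∀ y ∈ Y, x ⊔ y ∈ Y)
    (m : ℕ) (hm : Module.finrank ℝ ((Fin n → ℝ) ⧸ Y) = m) :
    n - 2 * m ≤ {i : Fin n | (Pi.single i 1 : Fin n → ℝ) ∈ Y}.ncard ∧
      {i : Fin n | (Pi.single i 1 : Fin n → ℝ) ∈ Y}.ncard ≤ n - m := by
  have hdim : m + finrank ℝ Y = n := by simpa [hm] using Y.finrank_quotient_add_finrank
  have hupper := Y.ncard_setOf_single_mem_le_finrank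
  have hlower := Submodule.two_mul_finrank_le_of_support_subset
    (fun x hx y hy => hlat x hx y hy) univ fun _ _ => subset_univ _
  rw [ncard_univ, Nat.card_fin] at hlower
  omega
end
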